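/- For every m = 1, 2, ..., the equivalence constant κ(n) of the first n basis vectors of the 2-convexified Tsirelson space T² with ℓ₂ⁿ satisfies lim_{n→∞} κ(n)/log_m(n) = 0, where log_m denotes the m-fold iterated logarithm; in particular κ(n) → ∞ as n → ∞ but κ(n) grows more slowly than any iterated logarithm. -/

import Mathlib

/-- The auxiliary norms in the inductive definition of the Tsirelson norm
(Figiel–Johnson construction): `tNormAux x 0 = ‖x‖_∞` and
`tNormAux x (n+1) = max (tNormAux x n)
  ((1/2) sup { ∑ᵢ ‖Eᵢ x‖ₙ : k ≤ E₁ < E₂ < ⋯ < E_k })`. -/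
noncomputable def tNormAux (x : ℕ → ℝ) : ℕ → ℝ
  | 0 => ⨆ j, |x j|
  | n + 1 => max (tNormAux x n)
      (sSup {r : ℝ | ∃ (k : ℕ) (E : Fin k → Finset ℕ),
        (∀ i, (E i).Nonempty) ∧
        (∀ i j : Fin k, i < j → ∀ a ∈ E i, ∀ b ∈ E j, a < b) ∧
        (∀ i, ∀ a ∈ E i, k ≤ a) ∧
        r = (1 / 2) * ∑ i, tNormAux (fun m => if m ∈ E i then x m else 0) n})

/-- The Tsirelson norm (of the dual-Tsirelson/Figiel–Johnson space `T`). -/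
noncomputable def tsirelsonNorm (x : ℕ → ℝ) : ℝ := ⨆ n, tNormAux x n

/-- The norm of the 2-convexification `T²` of the Tsirelson space. -/
noncomputable def t2Norm (a : ℕ → ℂ) : ℝ :=
  Real.sqrt (tsirelsonNorm (fun j => ‖a j‖ ^ 2))

/-- `κ(n)`: the equivalence constant between the `T²` norm and the `ℓ₂` norm on the
span of the first `n` basis vectors. -/
noncomputable def tsirelsonKappa (n : ℕ) : ℝ :=
  sSup {r : ℝ | ∃ a : ℕ → ℂ, Function.support a ⊆ ↑(Finset.range n) ∧ t2Norm a = 1 ∧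
    r = Real.sqrt (∑ j ∈ Finset.range n, ‖a j‖ ^ 2)}

/-- The `m`-fold iterated logarithm. -/
noncomputable def iterLog : ℕ → ℝ → ℝ
  | 0, x => x
  | m + 1, x => Real.log (iterLog m x)

namespace Tsi

/-- restriction of a sequence to a finset -/
noncomputable def res (x : ℕ → ℝ) (E : Finset ℕ) : ℕ → ℝ := fun m => if m ∈ E then x m else 0

lemma res_apply (x : ℕ → ℝ) (E : Finset ℕ) (m : ℕ) :
    res x E m = if m ∈ E then x m else 0 := rfl

lemma res_res (x : ℕ → ℝ) (E F : Finset ℕ) : res (res x E) F = res x (E ∩ F) := by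
  funext m
  simp only [res, Finset.mem_inter]
  by_cases hF : m ∈ F <;> by_cases hE : m ∈ E <;> simp [hF, hE]

/-- the set appearing in the successor case -/
def famSet (x : ℕ → ℝ) (n : ℕ) : Set ℝ :=
  {r : ℝ | ∃ (k : ℕ) (E : Fin k → Finset ℕ),
        (∀ i, (E i).Nonempty) ∧
        (∀ i j : Fin k, i < j → ∀ a ∈ E i, ∀ b ∈ E j, a < b) ∧
        (∀ i, ∀ a ∈ E i, k ≤ a) ∧
        r = (1 / 2) * ∑ i, tNormAux (res x (E i)) n}

lemma tNormAux_succ (x : ℕ → ℝ) (n : ℕ) :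
    tNormAux x (n + 1) = max (tNormAux x n) (sSup (famSet x n)) := rfl

lemma tNormAux_zero (x : ℕ → ℝ) : tNormAux x 0 = ⨆ j, |x j| := rfl

lemma famSet_pairwise_disj {k : ℕ} {E : Fin k → Finset ℕ}
    (hord : ∀ i j : Fin k, i < j → ∀ a ∈ E i, ∀ b ∈ E j, a < b) :
    ∀ i j : Fin k, i ≠ j → Disjoint (E i) (E j) := by
  intro i j hij
  rcases lt_or_gt_of_ne hij with h | h
  · rw [Finset.disjoint_left]
    intro a hai haj
    exact lt_irrefl a (hord i j h a hai a haj)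
  · rw [Finset.disjoint_left]
    intro a hai haj
    exact lt_irrefl a (hord j i h a haj a hai)

lemma tNormAux_nonneg (x : ℕ → ℝ) : ∀ n, 0 ≤ tNormAux x n := by
  intro n
  induction n with
  | zero => exact Real.iSup_nonneg fun j => abs_nonneg _
  | succ n ih => exact le_trans ih (le_max_left _ _)

/-- ℓ¹ bound for one element of the famSet -/
lemma famSet_elt_le {x : ℕ → ℝ} {s : Finset ℕ} (hx : ∀ m ∉ s, x m = 0) {n : ℕ}
    (ih : ∀ (y : ℕ → ℝ), (∀ m ∉ s, y m = 0) → tNormAux y n ≤ ∑ j ∈ s, |y j|)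
    {r : ℝ} (hr : r ∈ famSet x n) : r ≤ ∑ j ∈ s, |x j| := by
  obtain ⟨k, E, hne, hord, hmin, rfl⟩ := hr
  have h1 : ∀ i : Fin k, tNormAux (res x (E i)) n ≤ ∑ j ∈ s ∩ E i, |x j| := by
    intro i
    have hres : ∀ m ∉ s, res x (E i) m = 0 := by
      intro m hm
      by_cases hmE : m ∈ E i
      · simp [res, hmE, hx m hm]
      · simp [res, hmE]
    refine le_trans (ih _ hres) (le_of_eq ?_)
    have h0 : ∀ j ∈ s, j ∉ s ∩ E i → |res x (E i) j| = 0 := by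
      intro j hjs hj
      have hjE : j ∉ E i := fun h => hj (Finset.mem_inter.2 ⟨hjs, h⟩)
      simp [res, hjE]
    rw [← Finset.sum_subset Finset.inter_subset_left h0]
    refine Finset.sum_congr rfl (fun j hj => ?_)
    rw [res_apply, if_pos (Finset.mem_inter.1 hj).2]
  have h2 : ∑ i : Fin k, ∑ j ∈ s ∩ E i, |x j| ≤ ∑ j ∈ s, |x j| := by
    rw [← Finset.sum_biUnion (fun i _ j _ hij =>
      Finset.disjoint_coe.1 (by
        exact_mod_cast (famSet_pairwise_disj hord i j hij).mono
          Finset.inter_subset_right Finset.inter_subset_right))]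
    refine Finset.sum_le_sum_of_subset_of_nonneg ?_ (fun j _ _ => abs_nonneg _)
    intro j hj
    rcases Finset.mem_biUnion.1 hj with ⟨i, _, hji⟩
    exact (Finset.mem_inter.1 hji).1
  have hsum0 : (0:ℝ) ≤ ∑ j ∈ s, |x j| := Finset.sum_nonneg fun j _ => abs_nonneg _
  calc (1/2 : ℝ) * ∑ i, tNormAux (res x (E i)) n
      ≤ (1/2 : ℝ) * ∑ i : Fin k, ∑ j ∈ s ∩ E i, |x j| :=
        mul_le_mul_of_nonneg_left (Finset.sum_le_sum fun i _ => h1 i) (by norm_num)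
    _ ≤ (1/2 : ℝ) * ∑ j ∈ s, |x j| := mul_le_mul_of_nonneg_left h2 (by norm_num)
    _ ≤ ∑ j ∈ s, |x j| := by linarith

/-- ℓ¹ bound -/
lemma tNormAux_le_sum (s : Finset ℕ) :
    ∀ (n : ℕ) (x : ℕ → ℝ), (∀ m ∉ s, x m = 0) → tNormAux x n ≤ ∑ j ∈ s, |x j| := by
  intro n
  induction n with
  | zero =>
    intro x hx
    refine ciSup_le fun j => ?_
    by_cases hj : j ∈ s
    · exact Finset.single_le_sum (fun i _ => abs_nonneg (x i)) hj
    · rw [hx j hj, abs_zero]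
      exact Finset.sum_nonneg fun i _ => abs_nonneg _
  | succ n ih =>
    intro x hx
    rw [tNormAux_succ]
    refine max_le (ih x hx) (Real.sSup_le ?_ (Finset.sum_nonneg fun i _ => abs_nonneg _))
    intro r hr
    exact famSet_elt_le hx ih hr

lemma famSet_bddAbove {x : ℕ → ℝ} {s : Finset ℕ} (hx : ∀ m ∉ s, x m = 0) (n : ℕ) :
    BddAbove (famSet x n) :=
  ⟨∑ j ∈ s, |x j|, fun _ hr => famSet_elt_le hx (fun y hy => tNormAux_le_sum s n y hy) hr⟩

lemma famSet_zero_mem (x : ℕ → ℝ) (n : ℕ) : (0:ℝ) ∈ famSet x n := by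
  refine ⟨0, Fin.elim0, ?_, ?_, ?_, ?_⟩
  · intro i; exact i.elim0
  · intro i; exact i.elim0
  · intro i; exact i.elim0
  · simp

lemma famSet_sSup_nonneg {x : ℕ → ℝ} {s : Finset ℕ} (hx : ∀ m ∉ s, x m = 0) (n : ℕ) :
    0 ≤ sSup (famSet x n) :=
  le_csSup (famSet_bddAbove hx n) (famSet_zero_mem x n)

lemma bddAbove_abs_range {x : ℕ → ℝ} {s : Finset ℕ} (hx : ∀ m ∉ s, x m = 0) :
    BddAbove (Set.range fun j => |x j|) := by
  refine ⟨∑ j ∈ s, |x j|, ?_⟩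
  rintro r ⟨j, rfl⟩
  show |x j| ≤ ∑ j ∈ s, |x j|
  by_cases hj : j ∈ s
  · exact Finset.single_le_sum (fun i _ => abs_nonneg (x i)) hj
  · rw [hx j hj, abs_zero]
    exact Finset.sum_nonneg fun i _ => abs_nonneg _

lemma coord_le_tNormAux0 {x : ℕ → ℝ} {s : Finset ℕ} (hx : ∀ m ∉ s, x m = 0) (j : ℕ) :
    x j ≤ tNormAux x 0 :=
  le_trans (le_abs_self _) (le_ciSup (bddAbove_abs_range hx) j)

/-- monotonicity in x (for pointwise `0 ≤ x ≤ y`) -/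
lemma tNormAux_mono (s : Finset ℕ) :
    ∀ (n : ℕ) (x y : ℕ → ℝ), (∀ j, 0 ≤ x j) → (∀ j, x j ≤ y j) → (∀ m ∉ s, y m = 0) →
      tNormAux x n ≤ tNormAux y n := by
  intro n
  induction n with
  | zero =>
    intro x y hx0 hxy hy
    refine ciSup_le fun j => ?_
    have : |x j| ≤ |y j| := by
      rw [abs_of_nonneg (hx0 j), abs_of_nonneg (le_trans (hx0 j) (hxy j))]
      exact hxy j
    exact le_trans this (le_ciSup (bddAbove_abs_range hy) j)
  | succ n ih =>
    intro x y hx0 hxy hy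
    rw [tNormAux_succ, tNormAux_succ]
    refine max_le (le_trans (ih x y hx0 hxy hy) (le_max_left _ _))
      (le_trans (Real.sSup_le ?_ (famSet_sSup_nonneg hy n)) (le_max_right _ _))
    rintro r ⟨k, E, hne, hord, hmin, rfl⟩
    have hmem : (1/2 : ℝ) * ∑ i, tNormAux (res y (E i)) n ∈ famSet y n :=
      ⟨k, E, hne, hord, hmin, rfl⟩
    refine le_trans ?_ (le_csSup (famSet_bddAbove hy n) hmem)
    refine mul_le_mul_of_nonneg_left (Finset.sum_le_sum fun i _ => ?_) (by norm_num)
    refine ih _ _ (fun j => ?_) (fun j => ?_) (fun m hm => ?_)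
    · by_cases hj : j ∈ E i <;> simp [res, hj, hx0 j]
    · by_cases hj : j ∈ E i <;> simp [res, hj, hxy j]
    · by_cases hmE : m ∈ E i
      · simp [res, hmE, hy m hm]
      · simp [res, hmE]

lemma tsirelsonNorm_bddAbove {x : ℕ → ℝ} {s : Finset ℕ} (hx : ∀ m ∉ s, x m = 0) :
    BddAbove (Set.range fun n => tNormAux x n) := by
  refine ⟨∑ j ∈ s, |x j|, ?_⟩
  rintro r ⟨n, rfl⟩
  exact tNormAux_le_sum s n x hx

lemma tNormAux_le_tsirelsonNorm {x : ℕ → ℝ} {s : Finset ℕ} (hx : ∀ m ∉ s, x m = 0) (n : ℕ) :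
    tNormAux x n ≤ tsirelsonNorm x :=
  le_ciSup (tsirelsonNorm_bddAbove hx) n

lemma tsirelsonNorm_nonneg (x : ℕ → ℝ) : 0 ≤ tsirelsonNorm x :=
  Real.iSup_nonneg fun n => tNormAux_nonneg x n

lemma tsirelsonNorm_le_sum {x : ℕ → ℝ} {s : Finset ℕ} (hx : ∀ m ∉ s, x m = 0) :
    tsirelsonNorm x ≤ ∑ j ∈ s, |x j| :=
  ciSup_le fun n => tNormAux_le_sum s n x hx

lemma tsirelsonNorm_mono {x y : ℕ → ℝ} {s : Finset ℕ} (hx0 : ∀ j, 0 ≤ x j)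
    (hxy : ∀ j, x j ≤ y j) (hy : ∀ m ∉ s, y m = 0) :
    tsirelsonNorm x ≤ tsirelsonNorm y :=
  ciSup_le fun n => le_trans (tNormAux_mono s n x y hx0 hxy hy)
    (tNormAux_le_tsirelsonNorm hy n)

lemma coord_le_tsirelsonNorm {x : ℕ → ℝ} {s : Finset ℕ} (hx : ∀ m ∉ s, x m = 0) (j : ℕ) :
    x j ≤ tsirelsonNorm x :=
  le_trans (coord_le_tNormAux0 hx j) (tNormAux_le_tsirelsonNorm hx 0)

/-- scaling -/
lemma res_smul (c : ℝ) (x : ℕ → ℝ) (E : Finset ℕ) :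
    res (fun j => c * x j) E = fun j => c * res x E j := by
  funext m
  by_cases hm : m ∈ E <;> simp [res, hm]

lemma tNormAux_smul_le {s : Finset ℕ} (c : ℝ) (hc : 0 ≤ c) :
    ∀ (n : ℕ) (x : ℕ → ℝ), (∀ m ∉ s, x m = 0) →
      tNormAux (fun j => c * x j) n ≤ c * tNormAux x n := by
  intro n
  induction n with
  | zero =>
    intro x hx
    refine ciSup_le fun j => ?_
    rw [abs_mul, abs_of_nonneg hc]
    exact mul_le_mul_of_nonneg_left (le_ciSup (bddAbove_abs_range hx) j) hc
  | succ n ih =>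
    intro x hx
    rw [tNormAux_succ, tNormAux_succ]
    refine max_le (le_trans (ih x hx) (mul_le_mul_of_nonneg_left (le_max_left _ _) hc)) ?_
    refine le_trans (Real.sSup_le ?_ (mul_nonneg hc (famSet_sSup_nonneg hx n)))
      (mul_le_mul_of_nonneg_left (le_max_right (tNormAux x n) (sSup (famSet x n))) hc)
    rintro r ⟨k, E, hne, hord, hmin, rfl⟩
    have key : ∀ i : Fin k, tNormAux (res (fun j => c * x j) (E i)) n
        ≤ c * tNormAux (res x (E i)) n := by
      intro i
      rw [res_smul]
      refine ih (res x (E i)) (fun m hm => ?_)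
      by_cases hmE : m ∈ E i
      · simp [res, hmE, hx m hm]
      · simp [res, hmE]
    calc (1/2 : ℝ) * ∑ i, tNormAux (res (fun j => c * x j) (E i)) n
        ≤ (1/2 : ℝ) * ∑ i, (c * tNormAux (res x (E i)) n) :=
          mul_le_mul_of_nonneg_left (Finset.sum_le_sum fun i _ => key i) (by norm_num)
      _ = c * ((1/2 : ℝ) * ∑ i, tNormAux (res x (E i)) n) := by
          rw [← Finset.mul_sum]; ring
      _ ≤ c * sSup (famSet x n) :=
          mul_le_mul_of_nonneg_left (le_csSup (famSet_bddAbove hx n)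
            ⟨k, E, hne, hord, hmin, rfl⟩) hc

lemma tNormAux_smul {s : Finset ℕ} (c : ℝ) (hc : 0 < c) (n : ℕ) (x : ℕ → ℝ)
    (hx : ∀ m ∉ s, x m = 0) :
    tNormAux (fun j => c * x j) n = c * tNormAux x n := by
  refine le_antisymm (tNormAux_smul_le c hc.le n x hx) ?_
  have hx' : ∀ m ∉ s, c * x m = 0 := fun m hm => by rw [hx m hm, mul_zero]
  have h2 := tNormAux_smul_le (s := s) c⁻¹ (inv_nonneg.2 hc.le) n (fun j => c * x j) hx'
  have heq : (fun j => c⁻¹ * (c * x j)) = x := by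
    funext j; field_simp
  rw [heq] at h2
  calc c * tNormAux x n ≤ c * (c⁻¹ * tNormAux (fun j => c * x j) n) :=
        mul_le_mul_of_nonneg_left h2 hc.le
    _ = tNormAux (fun j => c * x j) n := by field_simp

lemma tsirelsonNorm_smul {s : Finset ℕ} (c : ℝ) (hc : 0 < c) (x : ℕ → ℝ)
    (hx : ∀ m ∉ s, x m = 0) :
    tsirelsonNorm (fun j => c * x j) = c * tsirelsonNorm x := by
  have hx' : ∀ m ∉ s, c * x m = 0 := fun m hm => by rw [hx m hm, mul_zero]
  have heq : ∀ n, tNormAux (fun j => c * x j) n = c * tNormAux x n :=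
    fun n => tNormAux_smul (s := s) c hc n x hx
  refine le_antisymm (ciSup_le fun n => ?_) ?_
  · rw [heq n]
    exact mul_le_mul_of_nonneg_left (le_ciSup (tsirelsonNorm_bddAbove hx) n) hc.le
  · have h2 : tsirelsonNorm x ≤ tsirelsonNorm (fun j => c * x j) / c := by
      refine ciSup_le fun n => ?_
      rw [le_div_iff₀ hc, mul_comm]
      calc c * tNormAux x n = tNormAux (fun j => c * x j) n := (heq n).symm
        _ ≤ tsirelsonNorm (fun j => c * x j) := tNormAux_le_tsirelsonNorm hx' n
    calc c * tsirelsonNorm x ≤ c * (tsirelsonNorm (fun j => c * x j) / c) :=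
          mul_le_mul_of_nonneg_left h2 hc.le
      _ = tsirelsonNorm (fun j => c * x j) := by field_simp

end Tsi

namespace Tsi

lemma res_supp {x : ℕ → ℝ} {s : Finset ℕ} (hx : ∀ m ∉ s, x m = 0) (E : Finset ℕ) :
    ∀ m ∉ s, res x E m = 0 := fun m hm => by
  by_cases h : m ∈ E <;> simp [res, h, hx m hm]

lemma res_nonneg {x : ℕ → ℝ} (hx0 : ∀ j, 0 ≤ x j) (E : Finset ℕ) (j : ℕ) :
    0 ≤ res x E j := by
  by_cases h : j ∈ E <;> simp [res, h, hx0 j]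

lemma res_le {x : ℕ → ℝ} (hx0 : ∀ j, 0 ≤ x j) (E : Finset ℕ) (j : ℕ) :
    res x E j ≤ x j := by
  by_cases h : j ∈ E <;> simp [res, h, hx0 j]

lemma famLB {x : ℕ → ℝ} {s : Finset ℕ} (hx : ∀ m ∉ s, x m = 0) {n k : ℕ}
    {E : Fin k → Finset ℕ} (hne : ∀ i, (E i).Nonempty)
    (hord : ∀ i j : Fin k, i < j → ∀ a ∈ E i, ∀ b ∈ E j, a < b)
    (hmin : ∀ i, ∀ a ∈ E i, k ≤ a) :
    (1/2 : ℝ) * ∑ i, tNormAux (res x (E i)) n ≤ tNormAux x (n+1) := by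
  rw [tNormAux_succ]
  exact le_trans (le_csSup (famSet_bddAbove hx n) ⟨k, E, hne, hord, hmin, rfl⟩)
    (le_max_right _ _)

lemma blockLB {x : ℕ → ℝ} {s : Finset ℕ} (hx : ∀ m ∉ s, x m = 0)
    (hx0 : ∀ j, 0 ≤ x j) {a b : ℕ} (hb : b ≤ 2 * a) :
    (∑ j ∈ Finset.Ico a b, x j) ≤ 2 * tNormAux x 1 := by
  have hnn : 0 ≤ tNormAux x 1 := tNormAux_nonneg x 1
  rcases le_or_gt b a with h | h
  · rw [Finset.Ico_eq_empty (not_lt.2 h), Finset.sum_empty]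
    linarith
  · set k := b - a with hk
    have hka : k ≤ a := by omega
    have h3 : ∀ i : Fin k, x (a + (i : ℕ)) ≤ tNormAux (res x {a + (i : ℕ)}) 0 := by
      intro i
      have heq : res x {a + (i : ℕ)} (a + (i : ℕ)) = x (a + (i : ℕ)) := by simp [res]
      calc x (a + (i : ℕ)) = res x {a + (i : ℕ)} (a + (i : ℕ)) := heq.symm
        _ ≤ tNormAux (res x {a + (i : ℕ)}) 0 := coord_le_tNormAux0 (res_supp hx _) _
    have h4 : ∑ j ∈ Finset.Ico a b, x j = ∑ i : Fin k, x (a + (i : ℕ)) := by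
      rw [Finset.sum_Ico_eq_sum_range, ← Fin.sum_univ_eq_sum_range]
    have h5 := famLB (x := x) hx (n := 0) (k := k) (E := fun i => {a + (i : ℕ)})
      (fun i => Finset.singleton_nonempty _)
      (fun i j hij c hc d hd => by
        rw [Finset.mem_singleton] at hc hd
        have : (i : ℕ) < (j : ℕ) := hij
        omega)
      (fun i c hc => by
        rw [Finset.mem_singleton] at hc
        have : (c : ℕ) ≥ a := by omega
        have : (i : ℕ) < k := i.isLt
        omega)
    calc ∑ j ∈ Finset.Ico a b, x j = ∑ i : Fin k, x (a + (i : ℕ)) := h4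
      _ ≤ ∑ i : Fin k, tNormAux (res x {a + (i : ℕ)}) 0 :=
          Finset.sum_le_sum fun i _ => h3 i
      _ ≤ 2 * tNormAux x 1 := by linarith

lemma dyadLB {x : ℕ → ℝ} {s : Finset ℕ} (hx : ∀ m ∉ s, x m = 0)
    (hx0 : ∀ j, 0 ≤ x j) {A B : ℕ} (hk : B - A ≤ 2 ^ A) :
    ∑ l ∈ Finset.Ico A B, (∑ j ∈ Finset.Ico (2^l) (2^(l+1)), x j)
      ≤ 4 * tNormAux x 2 := by
  have hnn : 0 ≤ tNormAux x 2 := tNormAux_nonneg x 2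
  rcases le_or_gt B A with h | h
  · rw [Finset.Ico_eq_empty (not_lt.2 h), Finset.sum_empty]
    linarith
  · set k := B - A with hkdef
    have hEi : ∀ i : Fin k, ∀ c ∈ Finset.Ico (2^(A + (i:ℕ))) (2^(A + (i:ℕ) + 1)), k ≤ c := by
      intro i c hc
      rw [Finset.mem_Ico] at hc
      have h1 : 2 ^ A ≤ 2 ^ (A + (i:ℕ)) := Nat.pow_le_pow_right (by norm_num) (by omega)
      omega
    have h5 := famLB (x := x) hx (n := 1) (k := k)
      (E := fun i => Finset.Ico (2^(A + (i:ℕ))) (2^(A + (i:ℕ) + 1)))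
      (fun i => by
        rw [Finset.nonempty_Ico]
        exact Nat.pow_lt_pow_right (by norm_num) (by omega))
      (fun i j hij c hc d hd => by
        rw [Finset.mem_Ico] at hc hd
        have hij' : (i : ℕ) < (j : ℕ) := hij
        have h1 : 2 ^ (A + (i:ℕ) + 1) ≤ 2 ^ (A + (j:ℕ)) :=
          Nat.pow_le_pow_right (by norm_num) (by omega)
        omega)
      hEi
    have hinner : ∀ i : Fin k,
        (1/2 : ℝ) * ∑ j ∈ Finset.Ico (2^(A + (i:ℕ))) (2^(A + (i:ℕ) + 1)), x j
          ≤ tNormAux (res x (Finset.Ico (2^(A + (i:ℕ))) (2^(A + (i:ℕ) + 1)))) 1 := by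
      intro i
      set E := Finset.Ico (2^(A + (i:ℕ))) (2^(A + (i:ℕ) + 1)) with hE
      have hb2 : 2^(A + (i:ℕ) + 1) = 2 * 2^(A + (i:ℕ)) := by
        rw [pow_succ, mul_comm]
      have := blockLB (x := res x E) (res_supp hx E) (res_nonneg hx0 E)
        (a := 2^(A+(i:ℕ))) (b := 2^(A+(i:ℕ)+1)) (le_of_eq hb2)
      have hsum : ∑ j ∈ Finset.Ico (2^(A + (i:ℕ))) (2^(A + (i:ℕ) + 1)), res x E j
          = ∑ j ∈ Finset.Ico (2^(A + (i:ℕ))) (2^(A + (i:ℕ) + 1)), x j := by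
        refine Finset.sum_congr rfl fun j hj => ?_
        rw [res_apply, if_pos (by rw [hE]; exact hj)]
      rw [hsum] at this
      linarith
    have h6 : ∑ l ∈ Finset.Ico A B, (∑ j ∈ Finset.Ico (2^l) (2^(l+1)), x j)
        = ∑ i : Fin k, ∑ j ∈ Finset.Ico (2^(A + (i:ℕ))) (2^(A + (i:ℕ) + 1)), x j := by
      rw [Finset.sum_Ico_eq_sum_range, ← Fin.sum_univ_eq_sum_range]
    rw [h6]
    have h7 : ∑ i : Fin k, ∑ j ∈ Finset.Ico (2^(A + (i:ℕ))) (2^(A + (i:ℕ) + 1)), x j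
        ≤ ∑ i : Fin k, 2 * tNormAux (res x (Finset.Ico (2^(A + (i:ℕ))) (2^(A + (i:ℕ) + 1)))) 1 := by
      refine Finset.sum_le_sum fun i _ => ?_
      have := hinner i
      linarith
    have h8 : ∑ i : Fin k, 2 * tNormAux (res x (Finset.Ico (2^(A + (i:ℕ))) (2^(A + (i:ℕ) + 1)))) 1
        = 2 * ∑ i : Fin k, tNormAux (res x (Finset.Ico (2^(A + (i:ℕ))) (2^(A + (i:ℕ) + 1)))) 1 := by
      rw [Finset.mul_sum]
    rw [h8] at h7
    calc ∑ i : Fin k, ∑ j ∈ Finset.Ico (2^(A + (i:ℕ))) (2^(A + (i:ℕ) + 1)), x j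
        ≤ 2 * ∑ i : Fin k, tNormAux (res x (Finset.Ico (2^(A + (i:ℕ))) (2^(A + (i:ℕ) + 1)))) 1 := h7
      _ = 4 * ((1/2 : ℝ) * ∑ i : Fin k, tNormAux (res x (Finset.Ico (2^(A + (i:ℕ))) (2^(A + (i:ℕ) + 1)))) 1) := by ring
      _ ≤ 4 * tNormAux x 2 := by
          have := h5
          linarith

def tower : ℕ → ℕ
  | 0 => 2
  | (t+1) => 2 ^ tower t

def texp : ℕ → ℕ
  | 0 => 1
  | (t+1) => tower t

lemma tower_eq (t : ℕ) : tower t = 2 ^ texp t := by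
  cases t with
  | zero => rfl
  | succ t => rfl

lemma tower_ge (t : ℕ) : t + 2 ≤ tower t := by
  induction t with
  | zero => norm_num [tower]
  | succ t ih =>
    have h1 : tower t < 2 ^ tower t := Nat.lt_two_pow_self
    show t + 3 ≤ 2 ^ tower t
    omega

lemma texp_le_tower (t : ℕ) : texp t ≤ tower t := by
  cases t with
  | zero => norm_num [texp, tower]
  | succ t =>
    show tower t ≤ 2 ^ tower t
    exact le_of_lt (Nat.lt_two_pow_self)

lemma tower_le_succ (t : ℕ) : tower t ≤ tower (t+1) := by
  show tower t ≤ 2 ^ tower t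
  exact le_of_lt (Nat.lt_two_pow_self)

lemma tower_mono : Monotone tower := monotone_nat_of_le_succ tower_le_succ

lemma dyadSplit (x : ℕ → ℝ) (A : ℕ) : ∀ B, A ≤ B →
    ∑ j ∈ Finset.Ico (2^A) (2^B), x j
      = ∑ l ∈ Finset.Ico A B, ∑ j ∈ Finset.Ico (2^l) (2^(l+1)), x j := by
  refine Nat.le_induction ?_ ?_
  · simp
  · intro B hAB ih
    rw [Finset.sum_Ico_succ_top hAB, ← ih,
      ← Finset.sum_Ico_consecutive x (Nat.pow_le_pow_right (by norm_num) hAB)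
        (Nat.pow_le_pow_right (by norm_num) (Nat.le_succ B))]

lemma massBound : ∀ t (x : ℕ → ℝ), (∀ j, 0 ≤ x j) →
    (∀ m ∉ Finset.range (tower t), x m = 0) →
    ∑ j ∈ Finset.range (tower t), x j ≤ (4 * t + 2) * tsirelsonNorm x := by
  intro t
  induction t with
  | zero =>
    intro x hx0 hxs
    have h0 : x 0 ≤ tsirelsonNorm x := coord_le_tsirelsonNorm hxs 0
    have h1 : x 1 ≤ tsirelsonNorm x := coord_le_tsirelsonNorm hxs 1
    show ∑ j ∈ Finset.range (tower 0), x j ≤ (4 * (0:ℕ) + 2) * tsirelsonNorm x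
    rw [show tower 0 = 2 from rfl, Finset.sum_range_succ, Finset.sum_range_one]
    push_cast
    linarith
  | succ t ih =>
    intro x hx0 hxs
    have hmono : tower t ≤ tower (t+1) := tower_le_succ t
    have hsplit : ∑ j ∈ Finset.range (tower (t+1)), x j
        = ∑ j ∈ Finset.range (tower t), x j
          + ∑ j ∈ Finset.Ico (tower t) (tower (t+1)), x j := by
      rw [Finset.range_eq_Ico, Finset.range_eq_Ico]
      exact (Finset.sum_Ico_consecutive x (Nat.zero_le (tower t)) hmono).symm
    -- low part
    set y := res x (Finset.range (tower t)) with hy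
    have hy0 : ∀ j, 0 ≤ y j := res_nonneg hx0 _
    have hys : ∀ m ∉ Finset.range (tower t), y m = 0 := fun m hm => by
      simp [hy, res, hm]
    have hlow : ∑ j ∈ Finset.range (tower t), x j = ∑ j ∈ Finset.range (tower t), y j := by
      refine Finset.sum_congr rfl fun j hj => ?_
      rw [hy, res_apply, if_pos hj]
    have hIHy := ih y hy0 hys
    have hyx : tsirelsonNorm y ≤ tsirelsonNorm x :=
      tsirelsonNorm_mono hy0 (res_le hx0 _) hxs
    -- high part
    have hsplit2 : ∑ j ∈ Finset.Ico (tower t) (tower (t+1)), x j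
        = ∑ l ∈ Finset.Ico (texp t) (tower t), ∑ j ∈ Finset.Ico (2^l) (2^(l+1)), x j := by
      rw [← dyadSplit x (texp t) (tower t) (texp_le_tower t)]
      have h1 : tower t = 2 ^ texp t := tower_eq t
      have h2 : tower (t+1) = 2 ^ tower t := rfl
      rw [← h1, ← h2]
    have hdk : tower t - texp t ≤ 2 ^ (texp t) := by
      rw [← tower_eq t]
      omega
    have hhigh := dyadLB hxs hx0 (A := texp t) (B := tower t) hdk
    have htN2 : tNormAux x 2 ≤ tsirelsonNorm x := tNormAux_le_tsirelsonNorm hxs 2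
    have hts0 : 0 ≤ tsirelsonNorm x := tsirelsonNorm_nonneg x
    rw [hsplit, hsplit2, hlow]
    push_cast
    nlinarith [hIHy, hyx, hhigh, htN2]

namespace Tsi

def IsSch : ℕ → Finset ℕ → Prop
  | 0 => fun F => F.card ≤ 1
  | (d+1) => fun F => ∃ (k : ℕ) (G : Fin k → Finset ℕ),
      (∀ i, IsSch d (G i)) ∧
      (∀ i j : Fin k, i < j → ∀ a ∈ G i, ∀ b ∈ G j, a < b) ∧
      (∀ i, ∀ a ∈ G i, k ≤ a) ∧
      F = Finset.univ.biUnion G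

lemma isSch_empty : ∀ d, IsSch d (∅ : Finset ℕ)
  | 0 => by simp [IsSch]
  | (d+1) => by
      refine ⟨0, Fin.elim0, fun i => i.elim0, fun i => i.elim0, fun i => i.elim0, ?_⟩
      simp

lemma isSch_subset : ∀ (d : ℕ) (F F' : Finset ℕ), IsSch d F → F' ⊆ F → IsSch d F' := by
  intro d
  induction d with
  | zero =>
    intro F F' hF hsub
    exact le_trans (Finset.card_le_card hsub) hF
  | succ d ih =>
    rintro F F' ⟨k, G, hsch, hord, hmin, rfl⟩ hsub
    refine ⟨k, fun i => G i ∩ F', fun i => ih _ _ (hsch i) Finset.inter_subset_left,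
      fun i j hij a ha b hb => hord i j hij a (Finset.mem_inter.1 ha).1 b (Finset.mem_inter.1 hb).1,
      fun i a ha => hmin i a (Finset.mem_inter.1 ha).1, ?_⟩
    ext m
    simp only [Finset.mem_biUnion, Finset.mem_inter, Finset.mem_univ, true_and]
    constructor
    · intro hm
      have hmF : m ∈ Finset.univ.biUnion G := hsub hm
      rcases Finset.mem_biUnion.1 hmF with ⟨i, _, hmi⟩
      exact ⟨i, hmi, hm⟩
    · rintro ⟨i, _, hm⟩
      exact hm

lemma isSch_union {d k : ℕ} {E : Fin k → Finset ℕ} (F : Fin k → Finset ℕ)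
    (hsub : ∀ i, F i ⊆ E i)
    (hord : ∀ i j : Fin k, i < j → ∀ a ∈ E i, ∀ b ∈ E j, a < b)
    (hmin : ∀ i, ∀ a ∈ E i, k ≤ a)
    (hsch : ∀ i, IsSch d (F i)) :
    IsSch (d+1) (Finset.univ.biUnion F) :=
  ⟨k, F, hsch,
    fun i j hij a ha b hb => hord i j hij a (hsub i ha) b (hsub j hb),
    fun i a ha => hmin i a (hsub i ha), rfl⟩

open Classical in
/-- maximal capture of `x` by a depth-`d` admissible set inside `s ∩ E` -/
noncomputable def mu (x : ℕ → ℝ) (s E : Finset ℕ) (d : ℕ) : ℝ :=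
  ((s ∩ E).powerset.filter (IsSch d)).sup'
    ⟨∅, Finset.mem_filter.2 ⟨Finset.empty_mem_powerset _, isSch_empty d⟩⟩
    (fun F => ∑ j ∈ F, x j)

open Classical in
lemma le_mu {x : ℕ → ℝ} {s E F : Finset ℕ} {d : ℕ} (hF : F ⊆ s ∩ E) (hsch : IsSch d F) :
    ∑ j ∈ F, x j ≤ mu x s E d := by
  unfold mu
  exact Finset.le_sup' (fun F => ∑ j ∈ F, x j)
    (Finset.mem_filter.2 ⟨Finset.mem_powerset.2 hF, hsch⟩)

open Classical in
lemma mu_le {x : ℕ → ℝ} {s E : Finset ℕ} {d : ℕ} {B : ℝ}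
    (h : ∀ F : Finset ℕ, F ⊆ s ∩ E → IsSch d F → ∑ j ∈ F, x j ≤ B) :
    mu x s E d ≤ B := by
  refine Finset.sup'_le _ _ fun F hF => ?_
  rw [Finset.mem_filter, Finset.mem_powerset] at hF
  exact h F hF.1 hF.2

open Classical in
lemma mu_attained (x : ℕ → ℝ) (s E : Finset ℕ) (d : ℕ) :
    ∃ F : Finset ℕ, F ⊆ s ∩ E ∧ IsSch d F ∧ mu x s E d = ∑ j ∈ F, x j := by
  obtain ⟨F, hF, hval⟩ := Finset.exists_mem_eq_sup'
    (⟨∅, Finset.mem_filter.2 ⟨Finset.empty_mem_powerset _, isSch_empty d⟩⟩ :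
      ((s ∩ E).powerset.filter (IsSch d)).Nonempty) (fun F => ∑ j ∈ F, x j)
  rw [Finset.mem_filter, Finset.mem_powerset] at hF
  exact ⟨F, hF.1, hF.2, hval⟩

lemma mu_nonneg {x : ℕ → ℝ} (hx0 : ∀ j, 0 ≤ x j) (s E : Finset ℕ) (d : ℕ) :
    0 ≤ mu x s E d := by
  have := le_mu (x := x) (s := s) (E := E) (F := ∅) (d := d)
    (Finset.empty_subset _) (isSch_empty d)
  simpa using this

/-- The key upper bound for the Tsirelson norm in terms of captures. -/
lemma tN_le_mu (x : ℕ → ℝ) (s : Finset ℕ) (hx0 : ∀ j, 0 ≤ x j)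
    (hsupp : ∀ m ∉ s, x m = 0) :
    ∀ n (E : Finset ℕ), tNormAux (res x E) n
      ≤ mu x s E 0 + ∑ d ∈ Finset.range n, (2:ℝ)⁻¹ ^ (d+1) * mu x s E (d+1) := by
  intro n
  induction n with
  | zero =>
    intro E
    rw [Finset.range_zero, Finset.sum_empty, add_zero]
    refine ciSup_le fun j => ?_
    by_cases hjE : j ∈ E
    · by_cases hjs : j ∈ s
      · have h1 : |res x E j| = ∑ m ∈ ({j} : Finset ℕ), x m := by
          rw [res_apply, if_pos hjE, Finset.sum_singleton, abs_of_nonneg (hx0 j)]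
        rw [h1]
        refine le_mu ?_ ?_
        · simp [Finset.singleton_subset_iff, hjE, hjs]
        · simp [IsSch]
      · rw [res_apply, if_pos hjE, hsupp j hjs, abs_zero]
        exact mu_nonneg hx0 s E 0
    · rw [res_apply, if_neg hjE, abs_zero]
      exact mu_nonneg hx0 s E 0
  | succ n ih =>
    intro E
    rw [tNormAux_succ]
    have hressupp : ∀ m ∉ s, res x E m = 0 := res_supp hsupp E
    refine max_le ?_ ?_
    · refine le_trans (ih E) ?_
      have : ∑ d ∈ Finset.range n, (2:ℝ)⁻¹ ^ (d+1) * mu x s E (d+1)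
          ≤ ∑ d ∈ Finset.range (n+1), (2:ℝ)⁻¹ ^ (d+1) * mu x s E (d+1) := by
        refine Finset.sum_le_sum_of_subset_of_nonneg
          (Finset.range_subset_range.2 (Nat.le_succ n)) fun d _ _ => ?_
        exact mul_nonneg (by positivity) (mu_nonneg hx0 s E _)
      linarith
    · refine Real.sSup_le ?_ ?_
      · rintro r ⟨k, E', hne, hord, hmin, rfl⟩
        -- rewrite the inner restriction
        have hres : ∀ i : Fin k, res (res x E) (E' i) = res x (E ∩ E' i) := fun i =>
          res_res x E (E' i)
        have hIH : ∀ i : Fin k, tNormAux (res (res x E) (E' i)) n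
            ≤ mu x s (E ∩ E' i) 0
              + ∑ d ∈ Finset.range n, (2:ℝ)⁻¹ ^ (d+1) * mu x s (E ∩ E' i) (d+1) := by
          intro i
          rw [hres i]
          exact ih (E ∩ E' i)
        -- the key: sums of mus over the family
        have hkey : ∀ d : ℕ, ∑ i : Fin k, mu x s (E ∩ E' i) d ≤ mu x s E (d+1) := by
          intro d
          -- choose witnesses
          choose F hFsub hFsch hFval using fun i : Fin k => mu_attained x s (E ∩ E' i) d
          have hFsubE' : ∀ i, F i ⊆ E' i := fun i =>
            le_trans (hFsub i) (le_trans Finset.inter_subset_right Finset.inter_subset_right)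
          have hUsch : IsSch (d+1) (Finset.univ.biUnion F) :=
            isSch_union F hFsubE' hord hmin hFsch
          have hUsub : Finset.univ.biUnion F ⊆ s ∩ E := by
            intro m hm
            rcases Finset.mem_biUnion.1 hm with ⟨i, _, hmi⟩
            have h := hFsub i hmi
            rw [Finset.mem_inter] at h ⊢
            exact ⟨h.1, (Finset.mem_inter.1 h.2).1⟩
          have hdisj : ∀ (i j : Fin k), i ≠ j → Disjoint (F i) (F j) := fun i j hij =>
            (famSet_pairwise_disj hord i j hij).mono (hFsubE' i) (hFsubE' j)
          have hsum : ∑ j ∈ Finset.univ.biUnion F, x j = ∑ i : Fin k, ∑ j ∈ F i, x j :=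
            Finset.sum_biUnion (fun i _ j _ hij => Finset.disjoint_coe.1
              (by exact_mod_cast hdisj i j hij))
          calc ∑ i : Fin k, mu x s (E ∩ E' i) d = ∑ i : Fin k, ∑ j ∈ F i, x j :=
                Finset.sum_congr rfl fun i _ => hFval i
            _ = ∑ j ∈ Finset.univ.biUnion F, x j := hsum.symm
            _ ≤ mu x s E (d+1) := le_mu hUsub hUsch
        -- now put the element bound together
        have hsum1 : (1/2:ℝ) * ∑ i, tNormAux (res (res x E) (E' i)) n
            ≤ (1/2:ℝ) * ∑ i : Fin k, (mu x s (E ∩ E' i) 0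
              + ∑ d ∈ Finset.range n, (2:ℝ)⁻¹ ^ (d+1) * mu x s (E ∩ E' i) (d+1)) :=
          mul_le_mul_of_nonneg_left (Finset.sum_le_sum fun i _ => hIH i) (by norm_num)
        have hsum2 : ∑ i : Fin k, (mu x s (E ∩ E' i) 0
              + ∑ d ∈ Finset.range n, (2:ℝ)⁻¹ ^ (d+1) * mu x s (E ∩ E' i) (d+1))
            = (∑ i : Fin k, mu x s (E ∩ E' i) 0)
              + ∑ d ∈ Finset.range n, (2:ℝ)⁻¹ ^ (d+1)
                  * ∑ i : Fin k, mu x s (E ∩ E' i) (d+1) := by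
          rw [Finset.sum_add_distrib]
          congr 1
          rw [Finset.sum_comm]
          refine Finset.sum_congr rfl fun d _ => ?_
          rw [Finset.mul_sum]
        have hstep : (1/2:ℝ) * ((∑ i : Fin k, mu x s (E ∩ E' i) 0)
              + ∑ d ∈ Finset.range n, (2:ℝ)⁻¹ ^ (d+1)
                  * ∑ i : Fin k, mu x s (E ∩ E' i) (d+1))
            ≤ ∑ d ∈ Finset.range (n+1), (2:ℝ)⁻¹ ^ (d+1) * mu x s E (d+1) := by
          rw [Finset.sum_range_succ' (fun d => (2:ℝ)⁻¹ ^ (d+1) * mu x s E (d+1)) n]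
          have hA : (1/2:ℝ) * (∑ i : Fin k, mu x s (E ∩ E' i) 0)
              ≤ (2:ℝ)⁻¹ ^ (0+1) * mu x s E (0+1) := by
            have := hkey 0
            rw [pow_one]
            linarith
          have hB : (1/2:ℝ) * ∑ d ∈ Finset.range n, (2:ℝ)⁻¹ ^ (d+1)
                  * ∑ i : Fin k, mu x s (E ∩ E' i) (d+1)
              ≤ ∑ d ∈ Finset.range n, (2:ℝ)⁻¹ ^ (d+1+1) * mu x s E (d+1+1) := by
            rw [Finset.mul_sum]
            refine Finset.sum_le_sum fun d _ => ?_
            have h1 := hkey (d+1)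
            have h2 : (0:ℝ) ≤ (2:ℝ)⁻¹ ^ (d+1) := by positivity
            calc (1/2:ℝ) * ((2:ℝ)⁻¹ ^ (d+1) * ∑ i : Fin k, mu x s (E ∩ E' i) (d+1))
                ≤ (1/2:ℝ) * ((2:ℝ)⁻¹ ^ (d+1) * mu x s E (d+1+1)) := by
                  refine mul_le_mul_of_nonneg_left (mul_le_mul_of_nonneg_left h1 h2) (by norm_num)
              _ = (2:ℝ)⁻¹ ^ (d+1+1) * mu x s E (d+1+1) := by
                  rw [pow_succ]
                  ring
          linarith
        refine le_trans hsum1 ?_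
        rw [hsum2]
        refine le_trans hstep ?_
        have := mu_nonneg hx0 s E 0
        linarith
      · refine add_nonneg (mu_nonneg hx0 s E 0) ?_
        exact Finset.sum_nonneg fun d _ =>
          mul_nonneg (by positivity) (mu_nonneg hx0 s E _)

/-- partial geometric-arithmetic sum bound -/
lemma geo_sum_bound : ∀ n : ℕ,
    (∑ d ∈ Finset.range n, ((d:ℝ) + 2) * (2:ℝ)⁻¹ ^ (d+1)) + ((n:ℝ) + 3) * (2:ℝ)⁻¹ ^ n = 3 := by
  intro n
  induction n with
  | zero => norm_num
  | succ n ih =>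
    rw [Finset.sum_range_succ]
    have hps : (2:ℝ)⁻¹ ^ (n+1) = (2:ℝ)⁻¹ ^ n * 2⁻¹ := pow_succ _ _
    push_cast
    rw [hps]
    push_cast at ih
    nlinarith [ih]

lemma geo_sum_le (n : ℕ) :
    ∑ d ∈ Finset.range n, ((d:ℝ) + 2) * (2:ℝ)⁻¹ ^ (d+1) ≤ 3 := by
  have h := geo_sum_bound n
  have h2 : 0 ≤ ((n:ℝ) + 3) * (2:ℝ)⁻¹ ^ n := by positivity
  linarith

lemma geo_half : ∀ n : ℕ,
    (∑ d ∈ Finset.range n, (2:ℝ)⁻¹ ^ (d+1)) + (2:ℝ)⁻¹ ^ n = 1 := by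
  intro n
  induction n with
  | zero => norm_num
  | succ n ih =>
    rw [Finset.sum_range_succ]
    have hps : (2:ℝ)⁻¹ ^ (n+1) = (2:ℝ)⁻¹ ^ n * 2⁻¹ := pow_succ _ _
    rw [hps]
    linarith

/-- final norm bound from linear mu bounds -/
lemma tsN_le_of_mu_bound (x : ℕ → ℝ) (s : Finset ℕ) (hx0 : ∀ j, 0 ≤ x j)
    (hsupp : ∀ m ∉ s, x m = 0) (c : ℝ) (hc : 0 ≤ c)
    (hmu : ∀ d (F : Finset ℕ), IsSch d F → ∑ j ∈ F, x j ≤ (d:ℝ) + c) :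
    tsirelsonNorm x ≤ 2 * c + 4 := by
  have hresx : res x s = x := by
    funext m
    by_cases hm : m ∈ s
    · simp [res, hm]
    · simp [res, hm, hsupp m hm]
  refine ciSup_le fun n => ?_
  have h1 := tN_le_mu x s hx0 hsupp n s
  rw [hresx] at h1
  have hmu' : ∀ d, mu x s s d ≤ (d:ℝ) + c := fun d =>
    mu_le fun F _ hF => hmu d F hF
  have h2 : ∑ d ∈ Finset.range n, (2:ℝ)⁻¹ ^ (d+1) * mu x s s (d+1)
      ≤ ∑ d ∈ Finset.range n, (((d:ℝ) + 2) * (2:ℝ)⁻¹ ^ (d+1)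
          + (1 + c) * (2:ℝ)⁻¹ ^ (d+1)) := by
    refine Finset.sum_le_sum fun d _ => ?_
    have h4 : (0:ℝ) ≤ (2:ℝ)⁻¹ ^ (d+1) := by positivity
    have h5 := hmu' (d+1)
    push_cast at h5
    nlinarith
  rw [Finset.sum_add_distrib] at h2
  have h5 := geo_sum_le n
  have h6 : ∑ d ∈ Finset.range n, (1 + c) * (2:ℝ)⁻¹ ^ (d+1) ≤ 1 + c := by
    rw [← Finset.mul_sum]
    have hg : ∑ d ∈ Finset.range n, (2:ℝ)⁻¹ ^ (d+1) ≤ 1 := by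
      have h := geo_half n
      have h0 : (0:ℝ) ≤ (2:ℝ)⁻¹ ^ n := by positivity
      linarith
    nlinarith
  have hmu0 := hmu' 0
  push_cast at hmu0
  linarith

end Tsi

namespace Tsi

/-- helper: position sequence. `gseq f p t` with `f q = end of sub-structure with parameter q`. -/
def gseq (f : ℕ → ℕ) (p : ℕ) : ℕ → ℕ
  | 0 => 8 * p
  | (t+1) => 8 * f (gseq f p t)

/-- the recursive witness structures -/
noncomputable def bld : ℕ → ℕ → (ℕ → ℝ) × ℕ
  | 0, p => (fun j => if j ∈ Finset.Ico p (2*p) then (p:ℝ)⁻¹ else 0, 2*p)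
  | (s+1), p =>
    (fun j => (p:ℝ)⁻¹ * ∑ t ∈ Finset.range p,
        (bld s (gseq (fun q => (bld s q).2) p t)).1 j,
     gseq (fun q => (bld s q).2) p p)

noncomputable def bfun (s p : ℕ) : ℕ → ℝ := (bld s p).1
noncomputable def bend (s p : ℕ) : ℕ := (bld s p).2
noncomputable def bg (s p : ℕ) : ℕ → ℕ := gseq (fun q => bend s q) p

lemma bg_zero (s p : ℕ) : bg s p 0 = 8 * p := rfl
lemma bg_succ (s p t : ℕ) : bg s p (t+1) = 8 * bend s (bg s p t) := rfl

lemma bfun_zero (p : ℕ) :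
    bfun 0 p = fun j => if j ∈ Finset.Ico p (2*p) then (p:ℝ)⁻¹ else 0 := rfl
lemma bend_zero (p : ℕ) : bend 0 p = 2 * p := rfl
lemma bfun_succ (s p : ℕ) :
    bfun (s+1) p = fun j => (p:ℝ)⁻¹ * ∑ t ∈ Finset.range p, bfun s (bg s p t) j := rfl
lemma bend_succ (s p : ℕ) : bend (s+1) p = bg s p p := rfl

lemma bend_ge : ∀ s p, 2 * p ≤ bend s p := by
  intro s
  induction s with
  | zero => intro p; rw [bend_zero]
  | succ s ih =>
    intro p
    have hg : ∀ t, 8 * p ≤ bg s p t := by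
      intro t
      induction t with
      | zero => rw [bg_zero]
      | succ t iht =>
        rw [bg_succ]
        have h1 := ih (bg s p t)
        omega
    rw [bend_succ]
    have := hg p
    omega

lemma bg_mono_succ (s p t : ℕ) : 2 * bg s p t ≤ bg s p (t+1) := by
  rw [bg_succ]
  have := bend_ge s (bg s p t)
  omega

lemma bg_ge (s p t : ℕ) : 8 * p ≤ bg s p t := by
  induction t with
  | zero => rw [bg_zero]
  | succ t iht =>
    have := bg_mono_succ s p t
    omega

lemma bg_mono (s p : ℕ) : Monotone (bg s p) := by
  refine monotone_nat_of_le_succ (fun t => ?_)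
  have := bg_mono_succ s p t
  omega

lemma bg_pow (s p a : ℕ) : ∀ d, 2 ^ d * bg s p a ≤ bg s p (a + d) := by
  intro d
  induction d with
  | zero => simp
  | succ d ih =>
    have h1 := bg_mono_succ s p (a + d)
    have h2 : 2 ^ (d+1) * bg s p a = 2 * (2 ^ d * bg s p a) := by ring
    rw [h2, show a + (d+1) = (a + d) + 1 from rfl]
    omega

lemma bfun_nonneg : ∀ s p j, 0 ≤ bfun s p j := by
  intro s
  induction s with
  | zero =>
    intro p j
    rw [bfun_zero]
    dsimp only
    split <;> positivity
  | succ s ih =>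
    intro p j
    rw [bfun_succ]
    dsimp only
    exact mul_nonneg (by positivity) (Finset.sum_nonneg fun t _ => ih _ j)

lemma bfun_supp : ∀ s p j, bfun s p j ≠ 0 → p ≤ j ∧ j < bend s p := by
  intro s
  induction s with
  | zero =>
    intro p j hj
    rw [bfun_zero] at hj
    dsimp only at hj
    rw [bend_zero]
    by_cases h : j ∈ Finset.Ico p (2*p)
    · exact Finset.mem_Ico.1 h
    · simp [h] at hj
  | succ s ih =>
    intro p j hj
    rw [bfun_succ] at hj
    dsimp only at hj
    have hsum : ∑ t ∈ Finset.range p, bfun s (bg s p t) j ≠ 0 := by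
      intro h
      rw [h, mul_zero] at hj
      exact hj rfl
    obtain ⟨t, htr, ht⟩ := Finset.exists_ne_zero_of_sum_ne_zero hsum
    have htp : t < p := Finset.mem_range.1 htr
    obtain ⟨h1, h2⟩ := ih (bg s p t) j ht
    constructor
    · have := bg_ge s p t
      omega
    · rw [bend_succ]
      have h3 : bend s (bg s p t) ≤ bg s p (t+1) := by
        rw [bg_succ]; omega
      have h4 : bg s p (t+1) ≤ bg s p p := bg_mono s p htp
      omega

lemma bfun_mass : ∀ s p, 1 ≤ p → ∑ j ∈ Finset.range (bend s p), bfun s p j = 1 := by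
  intro s
  induction s with
  | zero =>
    intro p hp
    rw [bend_zero]
    have : ∀ j, bfun 0 p j = if j ∈ Finset.Ico p (2*p) then (p:ℝ)⁻¹ else 0 := fun j => rfl
    rw [Finset.sum_congr rfl fun j _ => this j]
    rw [Finset.sum_ite_mem]
    have hsub : Finset.Ico p (2*p) ⊆ Finset.range (2*p) := by
      intro m hm
      rw [Finset.mem_range]
      exact (Finset.mem_Ico.1 hm).2
    rw [Finset.inter_eq_right.2 hsub, Finset.sum_const, Nat.card_Ico]
    have hp0 : (p:ℝ) ≠ 0 := Nat.cast_ne_zero.2 (by omega)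
    rw [nsmul_eq_mul]
    have : ((2 * p - p : ℕ) : ℝ) = (p : ℝ) := by
      have : 2 * p - p = p := by omega
      rw [this]
    rw [this]
    field_simp
  | succ s ih =>
    intro p hp
    rw [bend_succ]
    have heq : ∀ j, bfun (s+1) p j = (p:ℝ)⁻¹ * ∑ t ∈ Finset.range p, bfun s (bg s p t) j :=
      fun j => rfl
    rw [Finset.sum_congr rfl fun j _ => heq j, ← Finset.mul_sum, Finset.sum_comm]
    have hinner : ∀ t ∈ Finset.range p,
        ∑ j ∈ Finset.range (bg s p p), bfun s (bg s p t) j = 1 := by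
      intro t htr
      have htp : t < p := Finset.mem_range.1 htr
      have h1 : Finset.range (bend s (bg s p t)) ⊆ Finset.range (bg s p p) := by
        refine Finset.range_subset_range.2 ?_
        have h3 : bend s (bg s p t) ≤ bg s p (t+1) := by rw [bg_succ]; omega
        exact le_trans h3 (bg_mono s p htp)
      rw [← Finset.sum_subset h1 (fun j _ hj => ?_)]
      · exact ih (bg s p t) (by have := bg_ge s p t; omega)
      · by_contra hne
        have := (bfun_supp s (bg s p t) j hne).2
        rw [Finset.mem_range] at hj
        exact hj this
    rw [Finset.sum_congr rfl hinner, Finset.sum_const, Finset.card_range, nsmul_eq_mul, mul_one]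
    have hp0 : (p:ℝ) ≠ 0 := Nat.cast_ne_zero.2 (by omega)
    field_simp

lemma bfun_cap_le_one (s p : ℕ) (hp : 1 ≤ p) (F : Finset ℕ) :
    ∑ j ∈ F, bfun s p j ≤ 1 := by
  have h1 : ∑ j ∈ F, bfun s p j = ∑ j ∈ F ∩ Finset.range (bend s p), bfun s p j := by
    refine (Finset.sum_subset Finset.inter_subset_left fun j hj hj2 => ?_).symm
    by_contra hne
    have h2 := (bfun_supp s p j hne).2
    exact hj2 (Finset.mem_inter.2 ⟨hj, Finset.mem_range.2 h2⟩)
  rw [h1, ← bfun_mass s p hp]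
  exact Finset.sum_le_sum_of_subset_of_nonneg Finset.inter_subset_right
    fun j _ _ => bfun_nonneg s p j

lemma bfun_disj (s p : ℕ) {t t' j : ℕ} (htt : t < t')
    (h1 : bfun s (bg s p t) j ≠ 0) (h2 : bfun s (bg s p t') j ≠ 0) : False := by
  obtain ⟨ha1, ha2⟩ := bfun_supp s (bg s p t) j h1
  obtain ⟨hb1, hb2⟩ := bfun_supp s (bg s p t') j h2
  have h3 : bend s (bg s p t) ≤ bg s p (t+1) := by rw [bg_succ]; omega
  have h4 : bg s p (t+1) ≤ bg s p t' := bg_mono s p htt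
  omega

lemma bfun_inner_sum_le_one : ∀ (s p j : ℕ),
    ∑ t ∈ Finset.range p, bfun s (bg s p t) j ≤ 1 := by
  intro s p j
  by_cases hz : ∀ t ∈ Finset.range p, bfun s (bg s p t) j = 0
  · rw [Finset.sum_eq_zero hz]; norm_num
  · push_neg at hz
    obtain ⟨t₀, ht₀r, ht₀⟩ := hz
    have hone : ∑ t ∈ Finset.range p, bfun s (bg s p t) j = bfun s (bg s p t₀) j := by
      refine Finset.sum_eq_single t₀ (fun t htr htne => ?_) (fun h => absurd ht₀r h)
      by_contra hne
      rcases Nat.lt_or_ge t t₀ with hlt | hge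
      · exact bfun_disj s p hlt hne ht₀
      · exact bfun_disj s p (lt_of_le_of_ne hge (Ne.symm htne)) ht₀ hne
    rw [hone]
    calc bfun s (bg s p t₀) j ≤ ∑ i ∈ ({j} : Finset ℕ), bfun s (bg s p t₀) i := by
          rw [Finset.sum_singleton]
      _ ≤ 1 := bfun_cap_le_one s (bg s p t₀)
          (by
            have h8 := bg_ge s p t₀
            have h9 : t₀ < p := Finset.mem_range.1 ht₀r
            omega) _

lemma bfun_val : ∀ s p j, bfun s p j ≤ (p:ℝ)⁻¹ := by
  intro s p j
  cases s with
  | zero =>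
    rw [bfun_zero]
    dsimp only
    split
    · exact le_refl _
    · positivity
  | succ s =>
    rw [bfun_succ]
    dsimp only
    calc (p:ℝ)⁻¹ * ∑ t ∈ Finset.range p, bfun s (bg s p t) j
        ≤ (p:ℝ)⁻¹ * 1 :=
          mul_le_mul_of_nonneg_left (bfun_inner_sum_le_one s p j) (by positivity)
      _ = (p:ℝ)⁻¹ := mul_one _

end Tsi

namespace Tsi

lemma isSch_zero_iff {F : Finset ℕ} : IsSch 0 F ↔ F.card ≤ 1 := Iff.rfl

lemma isSch_succ_iff {d : ℕ} {F : Finset ℕ} : IsSch (d+1) F ↔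
    ∃ (k : ℕ) (G : Fin k → Finset ℕ),
      (∀ i, IsSch d (G i)) ∧
      (∀ i j : Fin k, i < j → ∀ a ∈ G i, ∀ b ∈ G j, a < b) ∧
      (∀ i, ∀ a ∈ G i, k ≤ a) ∧
      F = Finset.univ.biUnion G := Iff.rfl

lemma cap_card_le_one (s p : ℕ) {F : Finset ℕ} (hF : F.card ≤ 1) :
    ∑ j ∈ F, bfun s p j ≤ (p:ℝ)⁻¹ := by
  rcases Nat.le_one_iff_eq_zero_or_eq_one.1 hF with h | h
  · rw [Finset.card_eq_zero.1 h, Finset.sum_empty]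
    positivity
  · obtain ⟨a, rfl⟩ := Finset.card_eq_one.1 h
    rw [Finset.sum_singleton]
    exact bfun_val s p a

lemma gsum2 : ∀ n : ℕ, (∑ i ∈ Finset.range n, (2:ℝ)⁻¹ ^ i) + 2 * (2:ℝ)⁻¹ ^ n = 2 := by
  intro n
  induction n with
  | zero => norm_num
  | succ n ih =>
    rw [Finset.sum_range_succ]
    have hps : (2:ℝ)⁻¹ ^ (n+1) = (2:ℝ)⁻¹ ^ n * 2⁻¹ := pow_succ _ _
    rw [hps]
    linarith

lemma bg_inv_sum_le (s p : ℕ) (hp : 1 ≤ p) (a b : ℕ) :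
    ∑ t ∈ Finset.Ico a b, ((bg s p t : ℕ):ℝ)⁻¹ ≤ 2 * ((bg s p a : ℕ):ℝ)⁻¹ := by
  have hbgpos : ∀ t, 0 < ((bg s p t : ℕ):ℝ) := by
    intro t
    have h1 := bg_ge s p t
    have h2 : (1:ℕ) ≤ bg s p t := by omega
    exact_mod_cast Nat.lt_of_lt_of_le Nat.zero_lt_one h2
  rw [Finset.sum_Ico_eq_sum_range]
  have hterm : ∀ i, ((bg s p (a + i) : ℕ):ℝ)⁻¹ ≤ (2:ℝ)⁻¹ ^ i * ((bg s p a : ℕ):ℝ)⁻¹ := by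
    intro i
    have h1 : (2:ℕ) ^ i * bg s p a ≤ bg s p (a + i) := bg_pow s p a i
    have h1' : ((2:ℝ) ^ i * (bg s p a : ℝ)) ≤ ((bg s p (a+i) : ℕ):ℝ) := by exact_mod_cast h1
    have h2 : (0:ℝ) < (2:ℝ) ^ i * (bg s p a : ℝ) :=
      mul_pos (by positivity) (hbgpos a)
    have h3 := inv_anti₀ h2 h1'
    rw [mul_inv] at h3
    calc ((bg s p (a+i) : ℕ):ℝ)⁻¹ ≤ ((2:ℝ)^i)⁻¹ * ((bg s p a : ℕ):ℝ)⁻¹ := h3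
      _ = (2:ℝ)⁻¹ ^ i * ((bg s p a : ℕ):ℝ)⁻¹ := by rw [inv_pow]
  calc ∑ i ∈ Finset.range (b - a), ((bg s p (a + i) : ℕ):ℝ)⁻¹
      ≤ ∑ i ∈ Finset.range (b - a), (2:ℝ)⁻¹ ^ i * ((bg s p a : ℕ):ℝ)⁻¹ :=
        Finset.sum_le_sum fun i _ => hterm i
    _ = (∑ i ∈ Finset.range (b - a), (2:ℝ)⁻¹ ^ i) * ((bg s p a : ℕ):ℝ)⁻¹ := by
        rw [Finset.sum_mul]
    _ ≤ 2 * ((bg s p a : ℕ):ℝ)⁻¹ := by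
        refine mul_le_mul_of_nonneg_right ?_ (le_of_lt (inv_pos.2 (hbgpos a)))
        have := gsum2 (b - a)
        have h0 : (0:ℝ) ≤ 2 * (2:ℝ)⁻¹ ^ (b - a) := by positivity
        linarith

/-- The key combinatorial upper bound: an admissible set of depth `e ≤ s`
captures at most `3/p` of the mass of `bld s p`. -/
lemma CL : ∀ s, ∀ e, e ≤ s → ∀ p, 1 ≤ p → ∀ F : Finset ℕ, IsSch e F →
    ∑ j ∈ F, bfun s p j ≤ 3 / (p:ℝ) := by
  have hinv3 : ∀ p : ℕ, 1 ≤ p → ((p:ℕ):ℝ)⁻¹ ≤ 3 / (p:ℝ) := by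
    intro p hp
    have hppos : (0:ℝ) < (p:ℝ) := by exact_mod_cast hp
    rw [div_eq_mul_inv]
    nlinarith [inv_pos.2 hppos]
  intro s
  induction s with
  | zero =>
    intro e he p hp F hF
    have he0 : e = 0 := by omega
    subst he0
    exact le_trans (cap_card_le_one 0 p (isSch_zero_iff.1 hF)) (hinv3 p hp)
  | succ s ih =>
    intro e he p hp F hF
    cases e with
    | zero =>
      exact le_trans (cap_card_le_one (s+1) p (isSch_zero_iff.1 hF)) (hinv3 p hp)
    | succ e =>
      have hes : e ≤ s := by omega
      have hppos : (0:ℝ) < (p:ℝ) := by exact_mod_cast hp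
      classical
      set c : ℕ → ℝ := fun t => ∑ j ∈ F, bfun s (bg s p t) j with hc
      have hswap : ∑ j ∈ F, bfun (s+1) p j = (p:ℝ)⁻¹ * ∑ t ∈ Finset.range p, c t := by
        calc ∑ j ∈ F, bfun (s+1) p j
            = ∑ j ∈ F, ((p:ℝ)⁻¹ * ∑ t ∈ Finset.range p, bfun s (bg s p t) j) :=
              Finset.sum_congr rfl (fun j _ => by rw [bfun_succ])
          _ = (p:ℝ)⁻¹ * ∑ j ∈ F, ∑ t ∈ Finset.range p, bfun s (bg s p t) j := by
              rw [Finset.mul_sum]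
          _ = (p:ℝ)⁻¹ * ∑ t ∈ Finset.range p, c t := by
              rw [Finset.sum_comm]
      rw [hswap]
      set T := (Finset.range p).filter (fun t => c t ≠ 0) with hT
      by_cases hTe : T = ∅
      · have hzero : ∑ t ∈ Finset.range p, c t = 0 := by
          refine Finset.sum_eq_zero (fun t htr => ?_)
          by_contra hne
          exact (Finset.eq_empty_iff_forall_notMem.1 hTe t)
            (Finset.mem_filter.2 ⟨htr, hne⟩)
        rw [hzero, mul_zero]
        positivity
      · have hTne : T.Nonempty := Finset.nonempty_iff_ne_empty.2 hTe
        set t₀ := T.min' hTne with ht₀def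
        have ht₀T : t₀ ∈ T := T.min'_mem hTne
        have ht₀r : t₀ ∈ Finset.range p := (Finset.mem_filter.1 ht₀T).1
        have hc₀ : c t₀ ≠ 0 := (Finset.mem_filter.1 ht₀T).2
        obtain ⟨j₀, hj₀F, hj₀⟩ := Finset.exists_ne_zero_of_sum_ne_zero hc₀
        obtain ⟨hj₀1, hj₀2⟩ := bfun_supp s (bg s p t₀) j₀ hj₀
        obtain ⟨k, G, hsch, hord, hmin, hFU⟩ := isSch_succ_iff.1 hF
        have hkj₀ : k ≤ j₀ := by
          rw [hFU] at hj₀F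
          rcases Finset.mem_biUnion.1 hj₀F with ⟨i, _, hji⟩
          exact hmin i j₀ hji
        have hkE : k < bend s (bg s p t₀) := by omega
        have hgb1 : ∀ t, 1 ≤ bg s p t := fun t => by have := bg_ge s p t; omega
        -- bound on pieces for t ≠ t₀
        have hct : ∀ t, c t ≤ 3 * (k:ℝ) * ((bg s p t : ℕ):ℝ)⁻¹ := by
          intro t
          have h1 : c t = ∑ i : Fin k, ∑ j ∈ G i, bfun s (bg s p t) j := by
            rw [hc]
            dsimp only
            rw [hFU]
            exact Finset.sum_biUnion (fun i _ j _ hij => Finset.disjoint_coe.1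
              (by exact_mod_cast famSet_pairwise_disj hord i j hij))
          rw [h1]
          have hbgt : (0:ℝ) < ((bg s p t : ℕ):ℝ) := by
            have := hgb1 t; exact_mod_cast Nat.lt_of_lt_of_le Nat.zero_lt_one this
          calc ∑ i : Fin k, ∑ j ∈ G i, bfun s (bg s p t) j
              ≤ ∑ _i : Fin k, 3 / ((bg s p t : ℕ):ℝ) :=
                Finset.sum_le_sum fun i _ => ih e hes (bg s p t) (hgb1 t) (G i) (hsch i)
            _ = (k:ℝ) * (3 / ((bg s p t : ℕ):ℝ)) := by
                rw [Finset.sum_const, Finset.card_univ, Fintype.card_fin, nsmul_eq_mul]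
            _ = 3 * (k:ℝ) * ((bg s p t : ℕ):ℝ)⁻¹ := by
                rw [div_eq_mul_inv]; ring
        have hc₀le : c t₀ ≤ 1 := by
          rw [hc]
          exact bfun_cap_le_one s (bg s p t₀) (hgb1 t₀) F
        -- tail
        have hsubI : T.erase t₀ ⊆ Finset.Ico (t₀+1) p := by
          intro t ht
          obtain ⟨htne, htT⟩ := Finset.mem_erase.1 ht
          have h2 : t₀ ≤ t := T.min'_le t htT
          have h3 : t < p := Finset.mem_range.1 (Finset.mem_filter.1 htT).1
          exact Finset.mem_Ico.2 ⟨by omega, h3⟩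
        have htail : ∑ t ∈ T.erase t₀, c t ≤ 1 := by
          have hE₀pos : (0:ℝ) < ((bend s (bg s p t₀) : ℕ):ℝ) := by
            have h5 := bend_ge s (bg s p t₀)
            have h6 := hgb1 t₀
            have : (1:ℕ) ≤ bend s (bg s p t₀) := by omega
            exact_mod_cast Nat.lt_of_lt_of_le Nat.zero_lt_one this
          have step1 : ∑ t ∈ T.erase t₀, c t
              ≤ ∑ t ∈ T.erase t₀, 3 * (k:ℝ) * ((bg s p t : ℕ):ℝ)⁻¹ :=
            Finset.sum_le_sum fun t _ => hct t
          have step2 : ∑ t ∈ T.erase t₀, 3 * (k:ℝ) * ((bg s p t : ℕ):ℝ)⁻¹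
              ≤ ∑ t ∈ Finset.Ico (t₀+1) p, 3 * (k:ℝ) * ((bg s p t : ℕ):ℝ)⁻¹ := by
            refine Finset.sum_le_sum_of_subset_of_nonneg hsubI (fun t _ _ => ?_)
            positivity
          have step3 : ∑ t ∈ Finset.Ico (t₀+1) p, 3 * (k:ℝ) * ((bg s p t : ℕ):ℝ)⁻¹
              = 3 * (k:ℝ) * ∑ t ∈ Finset.Ico (t₀+1) p, ((bg s p t : ℕ):ℝ)⁻¹ := by
            rw [Finset.mul_sum]
          have step4 := bg_inv_sum_le s p hp (t₀+1) p
          have step5 : ((bg s p (t₀+1) : ℕ):ℝ) = 8 * ((bend s (bg s p t₀) : ℕ):ℝ) := by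
            rw [bg_succ]
            push_cast
            ring
          have hkr : (k:ℝ) ≤ ((bend s (bg s p t₀) : ℕ):ℝ) := by
            exact_mod_cast le_of_lt hkE
          have hknn : (0:ℝ) ≤ (k:ℝ) := Nat.cast_nonneg k
          have step6 : 3 * (k:ℝ) * (2 * ((bg s p (t₀+1) : ℕ):ℝ)⁻¹) ≤ 1 := by
            rw [step5, mul_inv]
            have h8 : ((8:ℝ))⁻¹ = 1/8 := by norm_num
            have hEinv : (k:ℝ) * ((bend s (bg s p t₀) : ℕ):ℝ)⁻¹ ≤ 1 := by
              rw [← div_eq_mul_inv, div_le_one hE₀pos]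
              exact hkr
            nlinarith [inv_pos.2 hE₀pos, hEinv]
          have step7 : 3 * (k:ℝ) * ∑ t ∈ Finset.Ico (t₀+1) p, ((bg s p t : ℕ):ℝ)⁻¹
              ≤ 3 * (k:ℝ) * (2 * ((bg s p (t₀+1) : ℕ):ℝ)⁻¹) := by
            refine mul_le_mul_of_nonneg_left step4 (by positivity)
          calc ∑ t ∈ T.erase t₀, c t
              ≤ ∑ t ∈ Finset.Ico (t₀+1) p, 3 * (k:ℝ) * ((bg s p t : ℕ):ℝ)⁻¹ :=
                le_trans step1 step2
            _ = 3 * (k:ℝ) * ∑ t ∈ Finset.Ico (t₀+1) p, ((bg s p t : ℕ):ℝ)⁻¹ := step3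
            _ ≤ 3 * (k:ℝ) * (2 * ((bg s p (t₀+1) : ℕ):ℝ)⁻¹) := step7
            _ ≤ 1 := step6
        -- total
        have hTsum : ∑ t ∈ Finset.range p, c t = ∑ t ∈ T, c t := by
          refine (Finset.sum_subset (Finset.filter_subset _ _) (fun t htr htT => ?_)).symm
          by_contra hne
          exact htT (Finset.mem_filter.2 ⟨htr, hne⟩)
        have hTsplit : ∑ t ∈ T, c t = c t₀ + ∑ t ∈ T.erase t₀, c t :=
          (Finset.add_sum_erase T c ht₀T).symm
        have htot : ∑ t ∈ Finset.range p, c t ≤ 2 := by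
          rw [hTsum, hTsplit]
          linarith
        calc (p:ℝ)⁻¹ * ∑ t ∈ Finset.range p, c t ≤ (p:ℝ)⁻¹ * 2 :=
              mul_le_mul_of_nonneg_left htot (by positivity)
          _ ≤ 3 / (p:ℝ) := by
              rw [div_eq_mul_inv]
              nlinarith [inv_pos.2 hppos]

end Tsi

namespace Tsi

noncomputable def Q : ℕ → ℕ
  | 0 => 1
  | (s+1) => bend (s+1) (Q s)

lemma Q_succ (s : ℕ) : Q (s+1) = bend (s+1) (Q s) := rfl

lemma Q_ge_one : ∀ s, 1 ≤ Q s := by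
  intro s
  cases s with
  | zero => exact le_refl 1
  | succ s =>
    rw [Q_succ]
    have h1 := Q_ge_one s
    have h2 := bend_ge (s+1) (Q s)
    omega

lemma Q_ge_pow : ∀ s, 2 ^ s ≤ Q s := by
  intro s
  induction s with
  | zero => simp [Q]
  | succ s ih =>
    rw [Q_succ]
    have h1 := bend_ge (s+1) (Q s)
    have h2 : 2 ^ (s+1) = 2 * 2 ^ s := by ring
    omega

lemma Q_mono_succ (s : ℕ) : Q s ≤ Q (s+1) := by
  rw [Q_succ]
  have := bend_ge (s+1) (Q s)
  omega

lemma Q_mono : Monotone Q := monotone_nat_of_le_succ Q_mono_succ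

noncomputable def wit (D : ℕ) : ℕ → ℝ :=
  fun j => ∑ s ∈ Finset.range D, bfun (s+1) (Q s) j

lemma wit_nonneg (D : ℕ) (j : ℕ) : 0 ≤ wit D j :=
  Finset.sum_nonneg fun s _ => bfun_nonneg (s+1) (Q s) j

lemma wit_supp (D : ℕ) : ∀ m ∉ Finset.range (Q D), wit D m = 0 := by
  intro m hm
  rw [Finset.mem_range, not_lt] at hm
  refine Finset.sum_eq_zero fun s hs => ?_
  by_contra hne
  have h2 := (bfun_supp (s+1) (Q s) m hne).2
  have h3 : bend (s+1) (Q s) = Q (s+1) := (Q_succ s).symm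
  have h4 : Q (s+1) ≤ Q D := Q_mono (Finset.mem_range.1 hs)
  omega

lemma wit_mass (D : ℕ) : ∑ j ∈ Finset.range (Q D), wit D j = D := by
  unfold wit
  rw [Finset.sum_comm]
  have h1 : ∀ s ∈ Finset.range D,
      ∑ j ∈ Finset.range (Q D), bfun (s+1) (Q s) j = 1 := by
    intro s hs
    have hsub : Finset.range (bend (s+1) (Q s)) ⊆ Finset.range (Q D) := by
      refine Finset.range_subset_range.2 ?_
      rw [← Q_succ]
      exact Q_mono (Finset.mem_range.1 hs)
    rw [← Finset.sum_subset hsub (fun j _ hj => ?_)]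
    · exact bfun_mass (s+1) (Q s) (Q_ge_one s)
    · by_contra hne
      have := (bfun_supp (s+1) (Q s) j hne).2
      rw [Finset.mem_range] at hj
      exact hj this
  rw [Finset.sum_congr rfl h1, Finset.sum_const, Finset.card_range, nsmul_eq_mul, mul_one]

lemma wit_mu (D : ℕ) : ∀ (d : ℕ) (F : Finset ℕ), IsSch d F →
    ∑ j ∈ F, wit D j ≤ (d:ℝ) + 6 := by
  intro d F hF
  unfold wit
  rw [Finset.sum_comm]
  have hterm : ∀ s ∈ Finset.range D,
      ∑ j ∈ F, bfun (s+1) (Q s) j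
        ≤ (if s + 1 < d then (1:ℝ) else 0) + 3 * (2:ℝ)⁻¹ ^ s := by
    intro s _
    by_cases hd : d ≤ s + 1
    · have h1 := CL (s+1) d hd (Q s) (Q_ge_one s) F hF
      have h2 : 3 / ((Q s : ℕ):ℝ) ≤ 3 * (2:ℝ)⁻¹ ^ s := by
        have hq : ((2:ℝ)) ^ s ≤ ((Q s : ℕ):ℝ) := by exact_mod_cast Q_ge_pow s
        have hqpos : (0:ℝ) < (2:ℝ) ^ s := by positivity
        rw [div_eq_mul_inv, inv_pow]
        have := inv_anti₀ hqpos hq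
        nlinarith
      have h3 : (0:ℝ) ≤ (if s + 1 < d then (1:ℝ) else 0) := by positivity
      calc ∑ j ∈ F, bfun (s+1) (Q s) j ≤ 3 / ((Q s : ℕ):ℝ) := h1
        _ ≤ 3 * (2:ℝ)⁻¹ ^ s := h2
        _ ≤ (if s + 1 < d then (1:ℝ) else 0) + 3 * (2:ℝ)⁻¹ ^ s := by linarith
    · push_neg at hd
      have h1 := bfun_cap_le_one (s+1) (Q s) (Q_ge_one s) F
      rw [if_pos hd]
      have h2 : (0:ℝ) ≤ 3 * (2:ℝ)⁻¹ ^ s := by positivity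
      linarith
  calc ∑ s ∈ Finset.range D, ∑ j ∈ F, bfun (s+1) (Q s) j
      ≤ ∑ s ∈ Finset.range D, ((if s + 1 < d then (1:ℝ) else 0) + 3 * (2:ℝ)⁻¹ ^ s) :=
        Finset.sum_le_sum hterm
    _ = (∑ s ∈ Finset.range D, (if s + 1 < d then (1:ℝ) else 0))
        + 3 * ∑ s ∈ Finset.range D, (2:ℝ)⁻¹ ^ s := by
        rw [Finset.sum_add_distrib, Finset.mul_sum]
    _ ≤ (d:ℝ) + 3 * 2 := by
        have hA : ∑ s ∈ Finset.range D, (if s + 1 < d then (1:ℝ) else 0) ≤ (d:ℝ) := by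
          classical
          rw [Finset.sum_boole]
          have hsub : (Finset.range D).filter (fun s => s + 1 < d) ⊆ Finset.range d := by
            intro s hs
            rw [Finset.mem_filter] at hs
            rw [Finset.mem_range]
            omega
          have := Finset.card_le_card hsub
          rw [Finset.card_range] at this
          exact_mod_cast this
        have hB : ∑ s ∈ Finset.range D, (2:ℝ)⁻¹ ^ s ≤ 2 := by
          have := gsum2 D
          have h0 : (0:ℝ) ≤ 2 * (2:ℝ)⁻¹ ^ D := by positivity
          linarith
        nlinarith
    _ = (d:ℝ) + 6 := by norm_num

lemma wit_tsN_le (D : ℕ) : tsirelsonNorm (wit D) ≤ 16 := by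
  have h := tsN_le_of_mu_bound (wit D) (Finset.range (Q D)) (wit_nonneg D)
    (wit_supp D) 6 (by norm_num) (wit_mu D)
  linarith

lemma wit_tsN_pos (D : ℕ) (hD : 1 ≤ D) : 0 < tsirelsonNorm (wit D) := by
  have hmass := wit_mass D
  have hex : ∃ j ∈ Finset.range (Q D), 0 < wit D j := by
    by_contra hco
    push_neg at hco
    have : ∑ j ∈ Finset.range (Q D), wit D j ≤ 0 :=
      Finset.sum_nonpos fun j hj => hco j hj
    rw [hmass] at this
    have : (1:ℝ) ≤ (D:ℝ) := by exact_mod_cast hD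
    linarith
  obtain ⟨j, _, hj⟩ := hex
  exact lt_of_lt_of_le hj (coord_le_tsirelsonNorm (wit_supp D) j)

/-! ### kappa facts -/

def kappaSet (n : ℕ) : Set ℝ :=
  {r : ℝ | ∃ a : ℕ → ℂ, Function.support a ⊆ ↑(Finset.range n) ∧ t2Norm a = 1 ∧
    r = Real.sqrt (∑ j ∈ Finset.range n, ‖a j‖ ^ 2)}

lemma kappa_eq (n : ℕ) : tsirelsonKappa n = sSup (kappaSet n) := rfl

lemma t2_eq_one_norm {a : ℕ → ℂ} (h : t2Norm a = 1) :
    tsirelsonNorm (fun j => ‖a j‖ ^ 2) = 1 := by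
  have h0 : 0 ≤ tsirelsonNorm (fun j => ‖a j‖ ^ 2) := tsirelsonNorm_nonneg _
  have h1 := Real.sq_sqrt h0
  unfold t2Norm at h
  rw [h] at h1
  simpa using h1.symm

lemma supp_sq {a : ℕ → ℂ} {n : ℕ} (ha : Function.support a ⊆ ↑(Finset.range n)) :
    ∀ m ∉ Finset.range n, ‖a m‖ ^ 2 = 0 := by
  intro m hm
  have : a m = 0 := by
    by_contra hne
    exact hm (by exact_mod_cast ha hne)
  rw [this]
  simp

lemma kappaSet_elt_le {n : ℕ} {r : ℝ} (hr : r ∈ kappaSet n) {t : ℕ}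
    (hn : n ≤ tower t) : r ≤ Real.sqrt (4 * t + 2) := by
  obtain ⟨a, ha, h1, rfl⟩ := hr
  set x := fun j => ‖a j‖ ^ 2 with hx
  have hx0 : ∀ j, 0 ≤ x j := fun j => by positivity
  have hxs : ∀ m ∉ Finset.range n, x m = 0 := supp_sq ha
  have hxs' : ∀ m ∉ Finset.range (tower t), x m = 0 := by
    intro m hm
    refine hxs m fun hmem => hm ?_
    rw [Finset.mem_range] at hmem ⊢
    omega
  have hts : tsirelsonNorm x = 1 := t2_eq_one_norm h1
  have hmass := massBound t x hx0 hxs'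
  rw [hts, mul_one] at hmass
  have hsub : ∑ j ∈ Finset.range n, x j ≤ ∑ j ∈ Finset.range (tower t), x j :=
    Finset.sum_le_sum_of_subset_of_nonneg
      (Finset.range_subset_range.2 hn) (fun j _ _ => hx0 j)
  exact Real.sqrt_le_sqrt (by linarith)

lemma kappaSet_bddAbove (n : ℕ) : BddAbove (kappaSet n) := by
  refine ⟨Real.sqrt n, ?_⟩
  rintro r ⟨a, ha, h1, rfl⟩
  set x := fun j => ‖a j‖ ^ 2 with hx
  have hx0 : ∀ j, 0 ≤ x j := fun j => by positivity
  have hxs : ∀ m ∉ Finset.range n, x m = 0 := supp_sq ha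
  have hts : tsirelsonNorm x = 1 := t2_eq_one_norm h1
  have hcoord : ∀ j, x j ≤ 1 := fun j => by
    have := coord_le_tsirelsonNorm hxs j
    rw [hts] at this
    exact this
  have : ∑ j ∈ Finset.range n, x j ≤ n := by
    calc ∑ j ∈ Finset.range n, x j ≤ ∑ _j ∈ Finset.range n, (1:ℝ) :=
          Finset.sum_le_sum fun j _ => hcoord j
      _ = n := by rw [Finset.sum_const, Finset.card_range, nsmul_eq_mul, mul_one]
  exact Real.sqrt_le_sqrt this

lemma tNormAux_zero_fun (n : ℕ) : tNormAux (fun _ => (0:ℝ)) n = 0 := by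
  induction n with
  | zero =>
    rw [tNormAux_zero]
    simp only [abs_zero]
    exact ciSup_const
  | succ n ih =>
    rw [tNormAux_succ]
    have hsup : sSup (famSet (fun _ => (0:ℝ)) n) ≤ 0 := by
      refine Real.sSup_le ?_ le_rfl
      rintro r ⟨k, E, hne, hord, hmin, rfl⟩
      have hres : ∀ i : Fin k, res (fun _ => (0:ℝ)) (E i) = fun _ => (0:ℝ) := by
        intro i
        funext m
        simp [res]
      have : ∀ i : Fin k, tNormAux (res (fun _ => (0:ℝ)) (E i)) n = 0 := by
        intro i
        rw [hres i]
        exact ih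
      rw [Finset.sum_congr rfl fun i _ => this i]
      simp
    rw [ih]
    exact max_eq_left hsup

lemma indicator_tN (n : ℕ) :
    tNormAux (fun j => if j = 0 then (1:ℝ) else 0) n = 1 := by
  set x : ℕ → ℝ := fun j => if j = 0 then (1:ℝ) else 0 with hxdef
  have hsupp : ∀ m ∉ ({0} : Finset ℕ), x m = 0 := by
    intro m hm
    rw [Finset.mem_singleton] at hm
    simp [hxdef, hm]
  induction n with
  | zero =>
    rw [tNormAux_zero]
    refine le_antisymm (ciSup_le fun j => ?_) ?_
    · by_cases hj : j = 0 <;> simp [hxdef, hj]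
    · have h1 : |x 0| ≤ ⨆ j, |x j| := le_ciSup (bddAbove_abs_range hsupp) 0
      simpa [hxdef] using h1
  | succ n ih =>
    rw [tNormAux_succ, ih]
    refine max_eq_left ?_
    refine Real.sSup_le ?_ (by norm_num)
    rintro r ⟨k, E, hne, hord, hmin, rfl⟩
    rcases Nat.eq_zero_or_pos k with hk | hk
    · subst hk
      simp
    · have hres : ∀ i : Fin k, res x (E i) = fun _ => (0:ℝ) := by
        intro i
        funext m
        by_cases hm : m ∈ E i
        · have h0 : m ≠ 0 := by
            intro h
            have := hmin i m hm
            omega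
          simp [res, hm, hxdef, h0]
        · simp [res, hm]
      have hzero : ∀ i : Fin k, tNormAux (res x (E i)) n = 0 := by
        intro i
        rw [hres i]
        exact tNormAux_zero_fun n
      rw [Finset.sum_congr rfl fun i _ => hzero i]
      simp

lemma indicator_tsN : tsirelsonNorm (fun j => if j = 0 then (1:ℝ) else 0) = 1 := by
  have hsupp : ∀ m ∉ ({0} : Finset ℕ), (if m = 0 then (1:ℝ) else 0) = 0 := by
    intro m hm
    rw [Finset.mem_singleton] at hm
    simp [hm]
  refine le_antisymm (ciSup_le fun n => (indicator_tN n).le) ?_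
  have h := le_ciSup (tsirelsonNorm_bddAbove hsupp) 0
  rw [indicator_tN 0] at h
  exact h

lemma kappaSet_one_mem (n : ℕ) (hn : 1 ≤ n) : (1:ℝ) ∈ kappaSet n := by
  refine ⟨fun j => if j = 0 then (1:ℂ) else 0, ?_, ?_, ?_⟩
  · intro m hm
    rw [Function.mem_support] at hm
    by_cases h : m = 0
    · subst h
      exact_mod_cast Finset.mem_range.2 hn
    · simp [h] at hm
  · unfold t2Norm
    have heq : (fun j => ‖if j = 0 then (1:ℂ) else 0‖ ^ 2)
        = (fun j => if j = 0 then (1:ℝ) else 0) := by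
      funext j
      by_cases h : j = 0 <;> simp [h]
    rw [heq, indicator_tsN, Real.sqrt_one]
  · have heq : ∀ j, ‖if j = 0 then (1:ℂ) else 0‖ ^ 2 = if j = 0 then (1:ℝ) else 0 := by
      intro j
      by_cases h : j = 0 <;> simp [h]
    rw [Finset.sum_congr rfl fun j _ => heq j]
    rw [Finset.sum_ite_eq' (Finset.range n) 0 (fun _ => (1:ℝ))]
    rw [if_pos (Finset.mem_range.2 hn), Real.sqrt_one]

lemma kappaSet_subset {n n' : ℕ} (h : n ≤ n') : kappaSet n ⊆ kappaSet n' := by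
  rintro r ⟨a, ha, h1, rfl⟩
  refine ⟨a, fun m hm => Finset.mem_coe.2
    (Finset.range_subset_range.2 h (Finset.mem_coe.1 (ha hm))), h1, ?_⟩
  have hsum : ∑ j ∈ Finset.range n, ‖a j‖ ^ 2 = ∑ j ∈ Finset.range n', ‖a j‖ ^ 2 := by
    refine Finset.sum_subset (Finset.range_subset_range.2 h) (fun m _ hm => ?_)
    have ham : a m = 0 := by
      by_contra hne
      exact hm (Finset.mem_coe.1 (ha hne))
    rw [ham]
    simp
  rw [hsum]

lemma kappa_mono {n n' : ℕ} (hn : 1 ≤ n) (h : n ≤ n') :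
    tsirelsonKappa n ≤ tsirelsonKappa n' :=
  csSup_le_csSup (kappaSet_bddAbove n') ⟨1, kappaSet_one_mem n hn⟩ (kappaSet_subset h)

lemma kappa_ge_one {n : ℕ} (hn : 1 ≤ n) : 1 ≤ tsirelsonKappa n :=
  le_csSup (kappaSet_bddAbove n) (kappaSet_one_mem n hn)

lemma kappa_ub {n t : ℕ} (hn : n ≤ tower t) :
    tsirelsonKappa n ≤ Real.sqrt (4 * t + 2) :=
  Real.sSup_le (fun _ hr => kappaSet_elt_le hr hn) (Real.sqrt_nonneg _)

lemma kappa_wit_lb (D : ℕ) (hD : 1 ≤ D) :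
    Real.sqrt (D:ℝ) / 4 ≤ tsirelsonKappa (Q D) := by
  set N := tsirelsonNorm (wit D) with hN
  have hNpos : 0 < N := wit_tsN_pos D hD
  have hNle : N ≤ 16 := wit_tsN_le D
  set c : ℝ := (Real.sqrt N)⁻¹ with hc
  have hsN : 0 < Real.sqrt N := Real.sqrt_pos.2 hNpos
  have hcpos : 0 < c := inv_pos.2 hsN
  set a : ℕ → ℂ := fun j => ((c * Real.sqrt (wit D j) : ℝ) : ℂ) with ha
  have hsq : (fun j => ‖a j‖ ^ 2) = fun j => c^2 * wit D j := by
    funext j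
    rw [ha]
    have h1 : ‖((c * Real.sqrt (wit D j) : ℝ) : ℂ)‖ = |c * Real.sqrt (wit D j)| := by
      first
      | exact Complex.norm_real _
      | exact Complex.norm_ofReal _
      | (rw [Complex.norm_real]; exact Real.norm_eq_abs _)
      | exact Complex.abs_ofReal _
    have h2 : |c * Real.sqrt (wit D j)| = c * Real.sqrt (wit D j) :=
      abs_of_nonneg (mul_nonneg hcpos.le (Real.sqrt_nonneg _))
    dsimp only
    rw [h1, h2, mul_pow, Real.sq_sqrt (wit_nonneg D j)]
  have htsN2 : tsirelsonNorm (fun j => c^2 * wit D j) = c^2 * N := by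
    rw [hN]
    exact tsirelsonNorm_smul (s := Finset.range (Q D)) (c^2) (by positivity)
      (wit D) (wit_supp D)
  have ht2 : t2Norm a = 1 := by
    unfold t2Norm
    rw [hsq, htsN2, Real.sqrt_mul (sq_nonneg c) N, Real.sqrt_sq hcpos.le]
    rw [hc]
    field_simp
  have hsuppa : Function.support a ⊆ ↑(Finset.range (Q D)) := by
    intro m hm
    rw [Function.mem_support] at hm
    by_contra hmem
    have hm0 : wit D m = 0 := wit_supp D m (fun h => hmem (Finset.mem_coe.2 h))
    rw [ha] at hm
    simp [hm0] at hm
  have hval : ∑ j ∈ Finset.range (Q D), ‖a j‖ ^ 2 = c^2 * D := by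
    have : ∀ j, ‖a j‖ ^ 2 = c^2 * wit D j := fun j => congrFun hsq j
    rw [Finset.sum_congr rfl fun j _ => this j, ← Finset.mul_sum, wit_mass]
  have hmem : Real.sqrt (∑ j ∈ Finset.range (Q D), ‖a j‖ ^ 2) ∈ kappaSet (Q D) :=
    ⟨a, hsuppa, ht2, rfl⟩
  have hκ := le_csSup (kappaSet_bddAbove (Q D)) hmem
  have hval2 : Real.sqrt (∑ j ∈ Finset.range (Q D), ‖a j‖ ^ 2)
      = c * Real.sqrt D := by
    rw [hval, Real.sqrt_mul (sq_nonneg c), Real.sqrt_sq hcpos.le]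
  rw [hval2] at hκ
  have hc4 : (4:ℝ)⁻¹ ≤ c := by
    rw [hc]
    have h16 : Real.sqrt N ≤ 4 := by
      have : Real.sqrt N ≤ Real.sqrt 16 := Real.sqrt_le_sqrt hNle
      rw [show (16:ℝ) = 4^2 by norm_num, Real.sqrt_sq (by norm_num : (0:ℝ) ≤ 4)] at this
      exact this
    exact inv_anti₀ hsN h16
  calc Real.sqrt (D:ℝ) / 4 = (4:ℝ)⁻¹ * Real.sqrt D := by
        rw [div_eq_mul_inv, mul_comm]
    _ ≤ c * Real.sqrt D := mul_le_mul_of_nonneg_right hc4 (Real.sqrt_nonneg _)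
    _ ≤ tsirelsonKappa (Q D) := hκ

end Tsi

namespace Tsi

lemma two_pow_ge_two_mul (k : ℕ) (hk : 1 ≤ k) : 2 * k ≤ 2 ^ k := by
  induction k with
  | zero => omega
  | succ k ih =>
    rcases Nat.eq_zero_or_pos k with h | h
    · subst h; norm_num
    · have := ih h
      have h2 : 2 ^ (k+1) = 2 * 2 ^ k := by ring
      omega

lemma tower_pos_real (t : ℕ) : (0:ℝ) < (tower t : ℝ) := by
  have := tower_ge t
  have h : (1:ℕ) ≤ tower t := by omega
  exact_mod_cast Nat.lt_of_lt_of_le Nat.zero_lt_one h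

lemma iter_tower : ∀ (m s : ℕ) (y : ℝ),
    ((tower (s + 2*m) : ℕ):ℝ) ≤ y → ((tower s : ℕ):ℝ) ≤ iterLog m y := by
  intro m
  induction m with
  | zero =>
    intro s y h
    simpa [iterLog] using h
  | succ m ih =>
    intro s y h
    have hidx : s + 2*(m+1) = (s+2) + 2*m := by ring
    rw [hidx] at h
    have h3 := ih (s+2) y h
    show ((tower s : ℕ):ℝ) ≤ Real.log (iterLog m y)
    have hpos : (0:ℝ) < ((tower (s+2) : ℕ):ℝ) := tower_pos_real (s+2)
    have h4 : Real.log ((tower (s+2) : ℕ):ℝ) ≤ Real.log (iterLog m y) :=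
      Real.log_le_log hpos h3
    have h5 : ((tower (s+2) : ℕ):ℝ) = (2:ℝ) ^ (tower (s+1)) := by
      have : tower (s+2) = 2 ^ (tower (s+1)) := rfl
      rw [this]
      push_cast
      ring
    have h6 : Real.log ((tower (s+2) : ℕ):ℝ) = (tower (s+1) : ℝ) * Real.log 2 := by
      rw [h5, Real.log_pow]
    have h7 : ((tower s : ℕ):ℝ) ≤ (tower (s+1) : ℝ) * Real.log 2 := by
      have hmul : 2 * tower s ≤ tower (s+1) := by
        have : tower (s+1) = 2 ^ (tower s) := rfl
        have hge := tower_ge s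
        have := two_pow_ge_two_mul (tower s) (by omega)
        omega
      have hmulR : 2 * ((tower s : ℕ):ℝ) ≤ ((tower (s+1) : ℕ):ℝ) := by exact_mod_cast hmul
      have hlog2 : (0.6931471803 : ℝ) < Real.log 2 := Real.log_two_gt_d9
      have htpos := tower_pos_real s
      nlinarith
    linarith

lemma tower_ge_two_pow : ∀ t, 2 ^ t ≤ tower t := by
  intro t
  induction t with
  | zero => norm_num [tower]
  | succ t ih =>
    show 2 ^ (t+1) ≤ 2 ^ (tower t)
    refine Nat.pow_le_pow_right (by norm_num) ?_
    have := tower_ge t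
    omega

lemma two_pow_ge_sq : ∀ j, 4 ≤ j → j^2 ≤ 2^j := by
  intro j hj
  induction j with
  | zero => omega
  | succ j ih =>
    rcases Nat.lt_or_ge j 4 with h | h
    · have : j = 3 := by omega
      subst this
      norm_num
    · have h1 := ih h
      have h2 : 2 ^ (j+1) = 2 * 2 ^ j := by ring
      nlinarith

/-! ### main theorem -/

theorem stmt3main :
    Filter.Tendsto tsirelsonKappa Filter.atTop Filter.atTop ∧
    ∀ m : ℕ, 1 ≤ m →
      Filter.Tendsto (fun n : ℕ => tsirelsonKappa n / iterLog m (n : ℝ))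
        Filter.atTop (nhds 0) := by
  constructor
  · -- part 1
    rw [Filter.tendsto_atTop]
    intro b
    set K : ℕ := Nat.ceil |b| + 1 with hK
    set D : ℕ := 16 * K^2 with hD
    have hD1 : 1 ≤ D := by
      rw [hD]
      have hK1 : 1 ≤ K := by omega
      nlinarith
    have hlb := kappa_wit_lb D hD1
    have hsqrtD : Real.sqrt (D:ℝ) = 4 * K := by
      have h1 : ((D:ℕ):ℝ) = (4 * (K:ℝ))^2 := by
        rw [hD]
        push_cast
        ring
      rw [h1, Real.sqrt_sq (by positivity)]
    have hbK : b ≤ (K:ℝ) := by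
      have h1 : |b| ≤ (Nat.ceil |b| : ℝ) := Nat.le_ceil _
      have h2 : b ≤ |b| := le_abs_self b
      have h3 : ((Nat.ceil |b| : ℕ) : ℝ) ≤ (K:ℝ) := by
        rw [hK]; push_cast; linarith
      linarith
    have hlb2 : b ≤ tsirelsonKappa (Q D) := by
      rw [hsqrtD] at hlb
      have : (4 * (K:ℝ)) / 4 = (K:ℝ) := by ring
      rw [this] at hlb
      linarith
    refine Filter.eventually_atTop.2 ⟨Q D, fun n hn => ?_⟩
    exact le_trans hlb2 (kappa_mono (Q_ge_one D) hn)
  · -- part 2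
    intro m hm
    rw [Metric.tendsto_atTop]
    intro ε hε
    set j₀ : ℕ := 8*m + 12 + Nat.ceil (4/ε) with hj₀
    set T₀ : ℕ := 2*m + j₀ with hT₀
    refine ⟨tower T₀, fun n hn => ?_⟩
    -- the greatest t with tower t ≤ n
    set t := Nat.findGreatest (fun s => tower s ≤ n) n with ht
    have hT₀n : T₀ ≤ n := by
      have h1 := tower_ge T₀
      omega
    have hPT₀ : tower T₀ ≤ n := hn
    have ht1 : tower t ≤ n :=
      Nat.findGreatest_spec (P := fun s => tower s ≤ n) hT₀n hPT₀
    have htT₀ : T₀ ≤ t :=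
      Nat.le_findGreatest (P := fun s => tower s ≤ n) hT₀n hPT₀
    have htn : n < tower (t+1) := by
      by_contra hcon
      push_neg at hcon
      have htlt : t < n := by
        have := tower_ge t
        omega
      exact Nat.findGreatest_is_greatest (P := fun s => tower s ≤ n)
        (Nat.lt_succ_self t) (by omega) hcon
    clear_value t
    -- bounds
    have hκub := kappa_ub (n := n) (t := t + 1) (le_of_lt htn)
    set j : ℕ := t - 2*m with hj
    have hjt : j + 2*m = t := by omega
    have hjj₀ : j₀ ≤ j := by omega
    have hiter : ((tower j : ℕ):ℝ) ≤ iterLog m (n:ℝ) := by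
      refine iter_tower m j (n:ℝ) ?_
      rw [hjt]
      exact_mod_cast ht1
    have hjsq : ((j:ℝ))^2 ≤ ((tower j : ℕ):ℝ) := by
      have h1 : j^2 ≤ 2^j := two_pow_ge_sq j (by omega)
      have h2 : 2^j ≤ tower j := tower_ge_two_pow j
      exact_mod_cast le_trans h1 h2
    have hjpos : (0:ℝ) < (j:ℝ) := by
      have h12 : 12 ≤ j := by omega
      exact_mod_cast (by omega : 0 < j)
    have hiLpos : (0:ℝ) < iterLog m (n:ℝ) := by
      have := tower_pos_real j
      linarith
    -- κ n ≤ 2 j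
    have hκ2j : tsirelsonKappa n ≤ 2 * (j:ℝ) := by
      refine le_trans hκub ?_
      have h1 : (4 * (((t+1 : ℕ)):ℝ) + 2) ≤ (2 * (j:ℝ))^2 := by
        have ht_eq : (t:ℝ) = (j:ℝ) + 2*(m:ℝ) := by exact_mod_cast hjt.symm
        push_cast
        rw [ht_eq]
        have hj12 : (12:ℝ) ≤ (j:ℝ) := by exact_mod_cast (by omega : 12 ≤ j)
        have hm1 : (1:ℝ) ≤ (m:ℝ) := by exact_mod_cast hm
        have hjm : 8*(m:ℝ) + 12 ≤ (j:ℝ) := by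
          exact_mod_cast (by omega : 8*m + 12 ≤ j)
        nlinarith
      calc Real.sqrt (4 * (((t+1 : ℕ)):ℝ) + 2) ≤ Real.sqrt ((2 * (j:ℝ))^2) :=
            Real.sqrt_le_sqrt h1
        _ = 2 * (j:ℝ) := Real.sqrt_sq (by positivity)
      
    -- 2 j ≤ (ε/2) j²
    have h2j : 2 * (j:ℝ) ≤ (ε/2) * ((j:ℝ))^2 := by
      have h1 : (4/ε) ≤ ((Nat.ceil (4/ε) : ℕ):ℝ) := Nat.le_ceil _
      have h2 : ((Nat.ceil (4/ε) : ℕ):ℝ) ≤ (j:ℝ) := by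
        exact_mod_cast (by omega : Nat.ceil (4/ε) ≤ j)
      have h3 : 4/ε ≤ (j:ℝ) := le_trans h1 h2
      have h4 : 4 ≤ ε * (j:ℝ) := by
        rw [div_le_iff₀ hε] at h3
        linarith
      nlinarith
    -- conclude
    have hκn0 : 0 ≤ tsirelsonKappa n := by
      have h1 : 1 ≤ n := by
        have := tower_ge T₀
        omega
      linarith [kappa_ge_one h1]
    have hfrac : tsirelsonKappa n / iterLog m (n:ℝ) ≤ ε/2 := by
      have hjsqpos : (0:ℝ) < ((j:ℝ))^2 := by positivity
      have step1 : tsirelsonKappa n / iterLog m (n:ℝ)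
          ≤ tsirelsonKappa n / ((j:ℝ))^2 := by
        rw [div_eq_mul_inv, div_eq_mul_inv]
        refine mul_le_mul_of_nonneg_left ?_ hκn0
        refine inv_anti₀ hjsqpos ?_
        linarith
      have step2 : tsirelsonKappa n / ((j:ℝ))^2 ≤ (2 * (j:ℝ)) / ((j:ℝ))^2 :=
        div_le_div_of_nonneg_right hκ2j hjsqpos.le
      have step3 : (2 * (j:ℝ)) / ((j:ℝ))^2 ≤ ε/2 := by
        rw [div_le_iff₀ hjsqpos]
        nlinarith
      linarith
    rw [Real.dist_eq, sub_zero]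
    have habs : |tsirelsonKappa n / iterLog m (n:ℝ)| = tsirelsonKappa n / iterLog m (n:ℝ) :=
      abs_of_nonneg (div_nonneg hκn0 hiLpos.le)
    rw [habs]
    linarith

end Tsi
end Tsi


theorem stmt3 :
    Filter.Tendsto tsirelsonKappa Filter.atTop Filter.atTop ∧
    ∀ m : ℕ, 1 ≤ m →
      Filter.Tendsto (fun n : ℕ => tsirelsonKappa n / iterLog m (n : ℝ))
        Filter.atTop (nhds 0) := by
  exact Tsi.Tsi.stmt3main
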